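/- arXiv:1805.02106 — 6 statements merged into one kernel-verified Lean document; each statement's English description precedes it below -/
import Mathlib

section
/- Let a, b > 1, κ > 0, and let p satisfy the standing assumptions (decreasing, p(1)=0, lim_{M→1} -(1-M)^{1+κ} p'(M)/p(M) = c > 0). Define q(M) = (p(M)/M) ∫₀^M s^a (1-s)^{-b} p(s)^{-2} ds for 0 < M < 1. Then there exists a constant C₁ > 0 such that lim_{M→1} p(M) q(M) / (1-M)^{1+κ-b} = C₁. -/
/-!
Write `F x = ∫₀ˣ sᵃ (1-s)⁻ᵇ p(s)⁻² ds` and `G x = (1-x)^(1+κ-b) p(x)⁻²`, so that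
`p(M) q(M) / (1-M)^(1+κ-b) = F(M) / (M G(M))`. Since `p` is decreasing, the integrand is at least
a constant times `(1-s)⁻ᵇ` near `1`, and `b > 1` makes `F` diverge. Moreover
`G' = (1-x)⁻ᵇ p⁻² ((b-1-κ)(1-x)^κ - 2(1-x)^(1+κ) p'/p)`, so `F'/G' → 1/(2c)`, and the `∞/∞` form of
L'Hôpital's rule gives `C₁ = 1/(2c)`.
-/

open Real Set Filter Topology

theorem exists_eventually_le_add_of_hasDerivAt_le {f g f' g' : ℝ → ℝ} {a : ℝ}
    (hf : ∀ᶠ x in 𝓝[<] a, HasDerivAt f (f' x) x) (hg : ∀ᶠ x in 𝓝[<] a, HasDerivAt g (g' x) x)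
    (hle : ∀ᶠ x in 𝓝[<] a, f' x ≤ g' x) : ∃ C, ∀ᶠ x in 𝓝[<] a, f x ≤ g x + C := by
  obtain ⟨u, hua, hsub⟩ := mem_nhdsLT_iff_exists_Ioo_subset.1 (hf.and (hg.and hle))
  have hderiv (x) (hx : x ∈ Ioo u a) : HasDerivAt (fun y => f y - g y) (f' x - g' x) x :=
    (hsub hx).1.sub (hsub hx).2.1
  have hanti : AntitoneOn (fun y => f y - g y) (Ioo u a) := by
    refine antitoneOn_of_hasDerivWithinAt_nonpos (f' := fun x => f' x - g' x) (convex_Ioo u a)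
      (fun x hx => (hderiv x hx).continuousAt.continuousWithinAt) ?_ ?_
    · rw [interior_Ioo]; exact fun x hx => (hderiv x hx).hasDerivWithinAt
    · rw [interior_Ioo]; exact fun x hx => sub_nonpos.2 (hsub hx).2.2
  have hw : (u + a) / 2 ∈ Ioo u a := ⟨by linarith [mem_Iio.1 hua], by linarith [mem_Iio.1 hua]⟩
  refine ⟨f ((u + a) / 2) - g ((u + a) / 2), ?_⟩
  filter_upwards [Ioo_mem_nhdsLT hw.2] with x hx
  have := hanti hw ⟨hw.1.trans hx.1, hx.2⟩ hx.1.le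
  linarith

theorem lhopital_atTop_nhdsLT {F G F' G' : ℝ → ℝ} {a l : ℝ} (hl : 0 < l)
    (hF : ∀ᶠ x in 𝓝[<] a, HasDerivAt F (F' x) x) (hG : ∀ᶠ x in 𝓝[<] a, HasDerivAt G (G' x) x)
    (hG' : ∀ᶠ x in 𝓝[<] a, 0 < G' x) (hFtop : Tendsto F (𝓝[<] a) atTop)
    (hratio : Tendsto (fun x => F' x / G' x) (𝓝[<] a) (𝓝 l)) :
    Tendsto (fun x => F x / G x) (𝓝[<] a) (𝓝 l) := by
  have upper (M : ℝ) (hM : l < M) : ∃ C, ∀ᶠ x in 𝓝[<] a, F x ≤ M * G x + C :=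
    exists_eventually_le_add_of_hasDerivAt_le hF (hG.mono fun x hx => hx.const_mul M) <| by
      filter_upwards [hG', hratio.eventually (eventually_lt_nhds hM)] with x hx hlt
      exact (div_le_iff₀ hx).1 hlt.le
  have lower (m : ℝ) (hm : m < l) : ∃ C, ∀ᶠ x in 𝓝[<] a, m * G x ≤ F x + C :=
    exists_eventually_le_add_of_hasDerivAt_le (hG.mono fun x hx => hx.const_mul m) hF <| by
      filter_upwards [hG', hratio.eventually (eventually_gt_nhds hm)] with x hx hlt
      exact (le_div_iff₀ hx).1 hlt.le
  have hGtop : Tendsto G (𝓝[<] a) atTop := by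
    obtain ⟨C, hC⟩ := upper (2 * l) (by linarith)
    refine tendsto_atTop_mono' _ ?_
      ((tendsto_atTop_add_const_right _ (-C) hFtop).atTop_div_const (by positivity : 0 < 2 * l))
    filter_upwards [hC] with x hx
    rw [div_le_iff₀ (by positivity)]
    linarith
  have hsmall (C ε : ℝ) (hε : 0 < ε) : ∀ᶠ x in 𝓝[<] a, 0 < G x ∧ |C| < ε * G x := by
    filter_upwards [hGtop.eventually_gt_atTop 0,
      (tendsto_const_nhds.div_atTop hGtop).eventually (eventually_lt_nhds hε)] with x hGx hx
    exact ⟨hGx, by rwa [div_lt_iff₀ hGx] at hx⟩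
  refine tendsto_order.2 ⟨fun m hm => ?_, fun M hM => ?_⟩
  · obtain ⟨C, hC⟩ := lower ((m + l) / 2) (by linarith)
    filter_upwards [hC, hsmall C ((l - m) / 2) (by linarith)] with x hx ⟨hGx, hCx⟩
    rw [lt_div_iff₀ hGx]
    linarith [le_abs_self C]
  · obtain ⟨C, hC⟩ := upper ((l + M) / 2) (by linarith)
    filter_upwards [hC, hsmall C ((M - l) / 2) (by linarith)] with x hx ⟨hGx, hCx⟩
    rw [div_lt_iff₀ hGx]
    linarith [le_abs_self C]

theorem tendsto_one_sub_nhdsGT_zero : Tendsto (fun x : ℝ => 1 - x) (𝓝[<] 1) (𝓝[>] 0) := by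
  have h : Tendsto (fun x : ℝ => 1 - x) (𝓝[<] 1) (𝓝[>] (1 - 1)) := map_subLeft_nhdsLT.le
  rwa [sub_self] at h

theorem hasDerivAt_integral_of_continuousOn_Ico {f : ℝ → ℝ} {a b x : ℝ}
    (hf : ContinuousOn f (Ico a b)) (hx : x ∈ Ioo a b) :
    HasDerivAt (fun y => ∫ s in a..y, f s) (f x) x := by
  have hf' : ContinuousOn f (Ioo a b) := hf.mono Ioo_subset_Ico_self
  refine intervalIntegral.integral_hasDerivAt_right ?_
    (hf'.stronglyMeasurableAtFilter isOpen_Ioo x hx) (hf'.continuousAt (Ioo_mem_nhds hx.1 hx.2))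
  refine (hf.mono ?_).intervalIntegrable
  rw [uIcc_of_le hx.1.le]
  exact Icc_subset_Ico_right hx.2

noncomputable def qIntegrand (a b : ℝ) (p : ℝ → ℝ) (s : ℝ) : ℝ :=
  s ^ a * (1 - s) ^ (-b) * p s ^ (-(2:ℝ))

section

variable {a b κ c : ℝ} {p p' : ℝ → ℝ}

theorem continuousOn_qIntegrand (ha : 0 ≤ a) (hpos : ∀ s ∈ Ico (0:ℝ) 1, 0 < p s)
    (hp : ContinuousOn p (Ico 0 1)) : ContinuousOn (qIntegrand a b p) (Ico 0 1) :=
  ((continuousOn_id.rpow_const fun _ _ => Or.inr ha).mul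
    ((continuousOn_const.sub continuousOn_id).rpow_const fun _ hs =>
      Or.inl (sub_pos.2 hs.2).ne')).mul
    (hp.rpow_const fun s hs => Or.inl (hpos s hs).ne')

theorem mul_one_sub_rpow_le_qIntegrand (ha : 0 ≤ a) (hpos : ∀ s ∈ Ico (0:ℝ) 1, 0 < p s)
    (hdec : StrictAntiOn p (Icc 0 1)) {t s : ℝ} (ht : 0 < t) (hts : t ≤ s) (hs : s < 1) :
    t ^ a * p t ^ (-(2:ℝ)) * (1 - s) ^ (-b) ≤ qIntegrand a b p s := by
  have hps : 0 < p s := hpos s ⟨ht.le.trans hts, hs⟩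
  have hpst : p s ≤ p t := hdec.antitoneOn ⟨ht.le, hts.trans hs.le⟩ ⟨ht.le.trans hts, hs.le⟩ hts
  have hpow : p t ^ (-(2:ℝ)) ≤ p s ^ (-(2:ℝ)) := rpow_le_rpow_of_nonpos hps hpst (by norm_num)
  have hta : t ^ a ≤ s ^ a := rpow_le_rpow ht.le hts ha
  have := rpow_nonneg (sub_nonneg.2 hs.le) (-b)
  have := rpow_nonneg (hps.le.trans hpst) (-(2:ℝ))
  have := rpow_nonneg (ht.le.trans hts) a
  calc t ^ a * p t ^ (-(2:ℝ)) * (1 - s) ^ (-b) ≤ s ^ a * p s ^ (-(2:ℝ)) * (1 - s) ^ (-b) := by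
        gcongr
    _ = qIntegrand a b p s := by unfold qIntegrand; ring

theorem tendsto_integral_qIntegrand_atTop (ha : 0 ≤ a) (hb : 1 < b)
    (hpos : ∀ s ∈ Ico (0:ℝ) 1, 0 < p s) (hp : ContinuousOn p (Ico 0 1))
    (hdec : StrictAntiOn p (Icc 0 1)) :
    Tendsto (fun x => ∫ s in 0..x, qIntegrand a b p s) (𝓝[<] 1) atTop := by
  -- `k (1-x)^(1-b)` has derivative `(1/2)^a p(1/2)^(-2) (1-x)^(-b)`, which bounds the integrand
  -- from below on `(1/2, 1)`.
  set k := (1 / 2 : ℝ) ^ a * p (1 / 2) ^ (-(2:ℝ)) / (b - 1) with hk_def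
  have hk : 0 < k := by
    have := hpos (1 / 2) ⟨by norm_num, by norm_num⟩
    have : 0 < b - 1 := by linarith
    positivity
  have hH : ∀ᶠ x in 𝓝[<] 1, HasDerivAt (fun x => k * (1 - x) ^ (1 - b))
      (k * (-1 * (1 - b) * (1 - x) ^ (1 - b - 1))) x := by
    filter_upwards [self_mem_nhdsWithin] with x hx
    exact (((hasDerivAt_id x).const_sub 1).rpow_const
      (Or.inl (sub_pos.2 (mem_Iio.1 hx)).ne')).const_mul k
  have hF : ∀ᶠ x in 𝓝[<] 1, HasDerivAt (fun x => ∫ s in 0..x, qIntegrand a b p s)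
      (qIntegrand a b p x) x := by
    filter_upwards [Ioo_mem_nhdsLT one_pos] with x hx
    exact hasDerivAt_integral_of_continuousOn_Ico (continuousOn_qIntegrand ha hpos hp) hx
  have hle : ∀ᶠ x in 𝓝[<] 1, k * (-1 * (1 - b) * (1 - x) ^ (1 - b - 1)) ≤ qIntegrand a b p x := by
    filter_upwards [Ioo_mem_nhdsLT (show (1 / 2 : ℝ) < 1 by norm_num)] with x hx
    convert mul_one_sub_rpow_le_qIntegrand ha hpos hdec (b := b) one_half_pos hx.1.le hx.2
      using 1
    rw [show 1 - b - 1 = -b by ring, hk_def]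
    field_simp [(show b - 1 ≠ 0 by linarith)]
    ring
  obtain ⟨C, hC⟩ := exists_eventually_le_add_of_hasDerivAt_le hH hF hle
  have hHtop : Tendsto (fun x => k * (1 - x) ^ (1 - b)) (𝓝[<] 1) atTop :=
    ((tendsto_rpow_neg_nhdsGT_zero (by linarith)).comp
      tendsto_one_sub_nhdsGT_zero).const_mul_atTop hk
  refine tendsto_atTop_mono' _ ?_ (tendsto_atTop_add_const_right _ (-C) hHtop)
  filter_upwards [hC] with x hx
  linarith

theorem hasDerivAt_one_sub_rpow_mul_rpow_neg_two {x : ℝ} (hx : x < 1) (hpx : 0 < p x)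
    (hp' : HasDerivAt p (p' x) x) :
    HasDerivAt (fun y => (1 - y) ^ (1 + κ - b) * p y ^ (-(2:ℝ)))
      ((1 - x) ^ (-b) * p x ^ (-(2:ℝ)) *
        ((b - 1 - κ) * (1 - x) ^ κ + 2 * (-(1 - x) ^ (1 + κ) * p' x / p x))) x := by
  have h1x : 0 < 1 - x := sub_pos.2 hx
  refine (((hasDerivAt_id x).const_sub 1).rpow_const (p := 1 + κ - b) (Or.inl h1x.ne')).mul
    (hp'.rpow_const (p := -(2:ℝ)) (Or.inl hpx.ne')) |>.congr_deriv ?_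
  have e1 : (1 - x) ^ (1 + κ - b - 1) = (1 - x) ^ κ * (1 - x) ^ (-b) := by
    rw [← rpow_add h1x]; ring_nf
  have e2 : (1 - x) ^ (1 + κ - b) = (1 - x) ^ (1 + κ) * (1 - x) ^ (-b) := by
    rw [← rpow_add h1x]; ring_nf
  have e3 : p x ^ (-(2:ℝ) - 1) = p x ^ (-(2:ℝ)) * (p x)⁻¹ := by
    rw [rpow_sub hpx, rpow_one, div_eq_mul_inv]
  simp only [id, e1, e2, e3]
  field_simp
  ring

theorem tendsto_rpow_add_logDeriv_term (hκ : 0 < κ)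
    (hlim : Tendsto (fun x => -(1 - x) ^ (1 + κ) * p' x / p x) (𝓝[<] 1) (𝓝 c)) :
    Tendsto (fun x => (b - 1 - κ) * (1 - x) ^ κ + 2 * (-(1 - x) ^ (1 + κ) * p' x / p x))
      (𝓝[<] 1) (𝓝 (2 * c)) := by
  have h : Tendsto (fun x : ℝ => (1 - x) ^ κ) (𝓝[<] 1) (𝓝 0) := by
    simpa [zero_rpow hκ.ne', Function.comp_def] using
      (continuousAt_rpow_const 0 κ (Or.inr hκ.le)).tendsto.comp
        (tendsto_nhdsWithin_iff.1 tendsto_one_sub_nhdsGT_zero).1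
  simpa using (h.const_mul (b - 1 - κ)).add (hlim.const_mul 2)

theorem tendsto_integral_qIntegrand_div (ha : 0 ≤ a) (hb : 1 < b) (hκ : 0 < κ) (hc : 0 < c)
    (hpos : ∀ s ∈ Ico (0:ℝ) 1, 0 < p s) (hderiv : ∀ s ∈ Ico (0:ℝ) 1, HasDerivAt p (p' s) s)
    (hdec : StrictAntiOn p (Icc 0 1))
    (hlim : Tendsto (fun x => -(1 - x) ^ (1 + κ) * p' x / p x) (𝓝[<] 1) (𝓝 c)) :
    Tendsto (fun x => (∫ s in 0..x, qIntegrand a b p s) /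
      ((1 - x) ^ (1 + κ - b) * p x ^ (-(2:ℝ)))) (𝓝[<] 1) (𝓝 (1 / (2 * c))) := by
  set d := fun x => (b - 1 - κ) * (1 - x) ^ κ + 2 * (-(1 - x) ^ (1 + κ) * p' x / p x)
  have hd : Tendsto d (𝓝[<] 1) (𝓝 (2 * c)) := tendsto_rpow_add_logDeriv_term hκ hlim
  have hdpos : ∀ᶠ x in 𝓝[<] 1, 0 < d x := hd.eventually (eventually_gt_nhds (by positivity))
  have hp : ContinuousOn p (Ico 0 1) := fun x hx => (hderiv x hx).continuousAt.continuousWithinAt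
  have hweight : ∀ᶠ x in 𝓝[<] 1, 0 < (1 - x) ^ (-b) * p x ^ (-(2:ℝ)) := by
    filter_upwards [Ioo_mem_nhdsLT one_pos] with x hx
    have := rpow_pos_of_pos (sub_pos.2 hx.2) (-b)
    have := rpow_pos_of_pos (hpos x (Ioo_subset_Ico_self hx)) (-(2:ℝ))
    positivity
  refine lhopital_atTop_nhdsLT (F' := qIntegrand a b p)
    (G' := fun x => (1 - x) ^ (-b) * p x ^ (-(2:ℝ)) * d x) (by positivity) ?_ ?_ ?_
    (tendsto_integral_qIntegrand_atTop ha hb hpos hp hdec) ?_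
  · filter_upwards [Ioo_mem_nhdsLT one_pos] with x hx
    exact hasDerivAt_integral_of_continuousOn_Ico (continuousOn_qIntegrand ha hpos hp) hx
  · filter_upwards [Ioo_mem_nhdsLT one_pos] with x hx
    exact hasDerivAt_one_sub_rpow_mul_rpow_neg_two hx.2 (hpos x (Ioo_subset_Ico_self hx))
      (hderiv x (Ioo_subset_Ico_self hx))
  · filter_upwards [hweight, hdpos] with x hw hdx
    positivity
  · have hxa : Tendsto (fun x : ℝ => x ^ a) (𝓝[<] 1) (𝓝 1) := by
      simpa using (continuousAt_rpow_const 1 a (Or.inl one_ne_zero)).tendsto.mono_left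
        nhdsWithin_le_nhds
    refine (hxa.div hd (by positivity)).congr' ?_
    filter_upwards [hweight] with x hw
    show x ^ a / d x = qIntegrand a b p x / ((1 - x) ^ (-b) * p x ^ (-(2:ℝ)) * d x)
    rw [qIntegrand, show x ^ a * (1 - x) ^ (-b) * p x ^ (-(2:ℝ)) =
      ((1 - x) ^ (-b) * p x ^ (-(2:ℝ))) * x ^ a by ring, mul_div_mul_left _ _ hw.ne']

end

theorem stmt_1_general (a b κ c : ℝ) (ha : 1 < a) (hb : 1 < b) (hκ : 0 < κ) (hc : 0 < c)
    (p p' q : ℝ → ℝ)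
    (hpos : ∀ M ∈ Set.Ico (0:ℝ) 1, 0 < p M)
    (hderiv : ∀ M ∈ Set.Ico (0:ℝ) 1, HasDerivAt p (p' M) M)
    (hdec : StrictAntiOn p (Set.Icc 0 1))
    (hlim : Tendsto (fun M => -(1 - M) ^ (1 + κ) * p' M / p M)
      (nhdsWithin 1 (Set.Iio 1)) (nhds c))
    (hq : ∀ M ∈ Set.Ioo (0:ℝ) 1,
      q M = (p M / M) * ∫ s in (0:ℝ)..M, s ^ a * (1 - s) ^ (-b) * (p s) ^ (-(2:ℝ))) :
    ∃ C₁ > 0, Tendsto (fun M => p M * q M / (1 - M) ^ (1 + κ - b))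
      (nhdsWithin 1 (Set.Iio 1)) (nhds C₁) := by
  refine ⟨1 / (2 * c), by positivity, ?_⟩
  have hratio :=
    tendsto_integral_qIntegrand_div (zero_le_one.trans ha.le) hb hκ hc hpos hderiv hdec hlim
  have hinv : Tendsto (fun M : ℝ => M⁻¹) (𝓝[<] 1) (𝓝 1) := by
    simpa using (tendsto_inv₀ (one_ne_zero' ℝ)).mono_left nhdsWithin_le_nhds
  refine (mul_one (1 / (2 * c)) ▸ hratio.mul hinv).congr' ?_
  filter_upwards [Ioo_mem_nhdsLT one_pos] with M hM
  have hpM := hpos M (Ioo_subset_Ico_self hM)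
  rw [hq M hM, rpow_neg hpM.le, rpow_two]
  simp only [qIntegrand]
  field_simp

theorem stmt_1 (a b κ c : ℝ) (ha : 1 < a) (hb : 1 < b) (hκ : 0 < κ) (hc : 0 < c)
    (p p' q : ℝ → ℝ)
    (hcont : ContinuousOn p (Set.Icc 0 1))
    (hpos : ∀ M ∈ Set.Ico (0:ℝ) 1, 0 < p M)
    (hderiv : ∀ M ∈ Set.Ico (0:ℝ) 1, HasDerivAt p (p' M) M)
    (hdec : StrictAntiOn p (Set.Icc 0 1))
    (hp1 : p 1 = 0)
    (hlim : Tendsto (fun M => -(1 - M) ^ (1 + κ) * p' M / p M)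
      (nhdsWithin 1 (Set.Iio 1)) (nhds c))
    (hq : ∀ M ∈ Set.Ioo (0:ℝ) 1,
      q M = (p M / M) * ∫ s in (0:ℝ)..M, s ^ a * (1 - s) ^ (-b) * (p s) ^ (-(2:ℝ))) :
    ∃ C₁ > 0, Tendsto (fun M => p M * q M / (1 - M) ^ (1 + κ - b))
      (nhdsWithin 1 (Set.Iio 1)) (nhds C₁) :=
  stmt_1_general a b κ c ha hb hκ hc p p' q hpos hderiv hdec hlim hq
end

section
/- Let a, b > 1, κ > 0, and let p, q be as in the biofilm model (q(M) = (p(M)/M) ∫₀^M s^a (1-s)^{-b} p(s)^{-2} ds, with p decreasing, p(1)=0, and lim_{M→1} -(1-M)^{1+κ} p'(M)/p(M) = c > 0). Then there exists a constant C₂ > 0 such that lim_{M→1} log(q(M)/p(M)) / (1-M)^{-κ} = C₂. -/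
/-!
Write `G(M) = (1 - M) ^ (-κ)`, `P = p ^ (-2)` and `I(M) = ∫₀^M s^a (1 - s)^(-b) P(s) ds`, so that
`q / p = I / M`. The hypothesis on `p'` says `(log p)' / G' → -c / κ`, so by l'Hôpital's rule in
its `∞ / ∞` form `log p / G → -c / κ`; in particular `P → ∞`. The integrand of `I` is `P'` times
a factor squeezed between `k (1 - t) ^ d` and `K (1 - t) ^ (-d)`, hence `I / P` is squeezed between
powers of `1 - M` and `log (I / P) = O(log (1 - M)) = o(G)`. Therefore
`log (q / p) = log (I / P) - 2 log p - log M ∼ (2c / κ) G`.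
-/

open Real Set Filter Topology

theorem sub_le_sub_of_hasDerivAt_le {f g f' g' : ℝ → ℝ} {x y : ℝ} (hxy : x ≤ y)
    (hf : ∀ t ∈ Icc x y, HasDerivAt f (f' t) t) (hg : ∀ t ∈ Icc x y, HasDerivAt g (g' t) t)
    (hle : ∀ t ∈ Ico x y, f' t ≤ g' t) : f y - f x ≤ g y - g x := by
  have key := image_le_of_deriv_right_le_deriv_boundary (B := fun t => g t - g x + f x)
    (fun t ht => (hf t ht).continuousAt.continuousWithinAt)
    (fun t ht => (hf t (Ico_subset_Icc_self ht)).hasDerivWithinAt) (by simp)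
    (fun t ht => ((hg t ht).continuousAt.continuousWithinAt.sub continuousWithinAt_const).add
      continuousWithinAt_const)
    (fun t ht =>
      (((hg t (Ico_subset_Icc_self ht)).sub_const (g x)).add_const (f x)).hasDerivWithinAt)
    hle (right_mem_Icc.2 hxy)
  linarith

theorem abs_sub_le_sub_of_abs_hasDerivAt_le {f g f' g' : ℝ → ℝ} {x y : ℝ} (hxy : x ≤ y)
    (hf : ∀ t ∈ Icc x y, HasDerivAt f (f' t) t) (hg : ∀ t ∈ Icc x y, HasDerivAt g (g' t) t)
    (hle : ∀ t ∈ Ico x y, |f' t| ≤ g' t) : |f y - f x| ≤ g y - g x := by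
  have hlow := sub_le_sub_of_hasDerivAt_le hxy (fun t ht => (hg t ht).neg) hf fun t ht =>
    neg_le_of_abs_le (hle t ht)
  have hup := sub_le_sub_of_hasDerivAt_le hxy hf hg fun t ht => le_of_abs_le (hle t ht)
  simp only [Pi.neg_apply] at hlow
  exact abs_le.mpr ⟨by linarith, hup⟩

theorem tendsto_div_of_tendsto_deriv_div_of_tendsto_atTop {F G F' G' : ℝ → ℝ} {b ℓ : ℝ}
    (hF : ∀ᶠ t in 𝓝[<] b, HasDerivAt F (F' t) t) (hG : ∀ᶠ t in 𝓝[<] b, HasDerivAt G (G' t) t)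
    (hG' : ∀ᶠ t in 𝓝[<] b, 0 < G' t) (hGtop : Tendsto G (𝓝[<] b) atTop)
    (hlim : Tendsto (fun t => F' t / G' t) (𝓝[<] b) (𝓝 ℓ)) :
    Tendsto (fun t => F t / G t) (𝓝[<] b) (𝓝 ℓ) := by
  rw [Metric.tendsto_nhds]
  intro ε hε
  obtain ⟨x, hxb, hx⟩ := mem_nhdsLT_iff_exists_Ioo_subset.mp <|
    hF.and <| hG.and <| hG'.and <| Metric.tendsto_nhds.mp hlim (ε / 2) (half_pos hε)
  obtain ⟨y, hxy, hyb⟩ := exists_between (mem_Iio.mp hxb)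
  set φ : ℝ → ℝ := fun t => F t - ℓ * G t
  have hφ : ∀ M ∈ Ioo y b, |φ M - φ y| ≤ ε / 2 * G M - ε / 2 * G y := by
    intro M hM
    have hsub : Icc y M ⊆ Ioo x b := Icc_subset_Ioo hxy hM.2
    refine abs_sub_le_sub_of_abs_hasDerivAt_le hM.1.le
      (fun t ht => (hx (hsub ht)).1.sub ((hx (hsub ht)).2.1.const_mul ℓ))
      (fun t ht => (hx (hsub ht)).2.1.const_mul _) fun t ht => ?_
    obtain ⟨-, -, hpos, hdist⟩ := hx (hsub (Ico_subset_Icc_self ht))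
    rw [Real.dist_eq] at hdist
    rw [show F' t - ℓ * G' t = (F' t / G' t - ℓ) * G' t by field_simp, abs_mul, abs_of_pos hpos]
    exact mul_le_mul_of_nonneg_right hdist.le hpos.le
  have hsmall : Tendsto (fun M => |φ y| / G M + ε / 2 * (1 - G y / G M)) (𝓝[<] b)
      (𝓝 (ε / 2)) := by
    have h := (tendsto_const_nhds (x := |φ y|)).div_atTop hGtop
    have h' := (tendsto_const_nhds (x := G y)).div_atTop hGtop
    simpa using h.add ((h'.const_sub 1).const_mul (ε / 2))
  filter_upwards [hsmall.eventually (gt_mem_nhds (half_lt_self hε)),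
    hGtop.eventually_gt_atTop 0, Ioo_mem_nhdsLT hyb] with M hlt hGM hM
  rw [Real.dist_eq]
  calc |F M / G M - ℓ| = |(φ y + (φ M - φ y)) / G M| := by
        congr 1
        field_simp
        ring
    _ = |φ y + (φ M - φ y)| / G M := by rw [abs_div, abs_of_pos hGM]
    _ ≤ (|φ y| + (ε / 2 * G M - ε / 2 * G y)) / G M := by
        gcongr
        exact (abs_add_le _ _).trans (add_le_add_right (hφ M hM) _)
    _ = |φ y| / G M + ε / 2 * (1 - G y / G M) := by field_simp
    _ < ε := by linarith

theorem tendsto_one_sub_nhdsLT_one : Tendsto (fun M : ℝ => 1 - M) (𝓝[<] 1) (𝓝[>] 0) := by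
  refine tendsto_nhdsWithin_of_tendsto_nhds_of_eventually_within _ ?_ ?_
  · have h : Tendsto (fun M : ℝ => 1 - M) (𝓝 1) (𝓝 0) := by
      simpa using (continuous_sub_left (1 : ℝ)).tendsto 1
    exact h.mono_left nhdsWithin_le_nhds
  · filter_upwards [self_mem_nhdsWithin] with M hM
    exact sub_pos.mpr (mem_Iio.mp hM)

theorem tendsto_one_sub_rpow_neg_atTop {κ : ℝ} (hκ : 0 < κ) :
    Tendsto (fun M : ℝ => (1 - M) ^ (-κ)) (𝓝[<] 1) atTop :=
  (tendsto_rpow_neg_nhdsGT_zero (neg_neg_of_pos hκ)).comp tendsto_one_sub_nhdsLT_one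

theorem tendsto_log_one_sub_div_one_sub_rpow_neg {κ : ℝ} (hκ : 0 < κ) :
    Tendsto (fun M : ℝ => log (1 - M) / (1 - M) ^ (-κ)) (𝓝[<] 1) (𝓝 0) := by
  refine ((tendsto_log_mul_rpow_nhdsGT_zero hκ).comp tendsto_one_sub_nhdsLT_one).congr' ?_
  filter_upwards [self_mem_nhdsWithin] with M hM
  rw [Function.comp_apply, rpow_neg (sub_pos.mpr (mem_Iio.mp hM)).le, div_inv_eq_mul]

theorem hasDerivAt_one_sub_rpow {t : ℝ} (κ : ℝ) (ht : t < 1) :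
    HasDerivAt (fun s : ℝ => (1 - s) ^ (-κ)) (κ * (1 - t) ^ (-κ - 1)) t := by
  have h := ((hasDerivAt_id' t).const_sub 1).rpow_const (p := -κ) (Or.inl (sub_pos.mpr ht).ne')
  convert h using 1
  ring

theorem tendsto_log_div_one_sub_rpow_neg_of_logDeriv {p p' : ℝ → ℝ} {κ c : ℝ} (hκ : 0 < κ)
    (hp : ∀ᶠ t in 𝓝[<] 1, HasDerivAt p (p' t) t) (hpos : ∀ᶠ t in 𝓝[<] 1, 0 < p t)
    (hlim : Tendsto (fun M => -(1 - M) ^ (1 + κ) * p' M / p M) (𝓝[<] 1) (𝓝 c)) :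
    Tendsto (fun M => log (p M) / (1 - M) ^ (-κ)) (𝓝[<] 1) (𝓝 (-(c / κ))) := by
  refine tendsto_div_of_tendsto_deriv_div_of_tendsto_atTop (F' := fun t => p' t / p t)
    (G' := fun t => κ * (1 - t) ^ (-κ - 1)) ?_ ?_ ?_ (tendsto_one_sub_rpow_neg_atTop hκ) ?_
  · filter_upwards [hp, hpos] with t hpt hpt₀ using hpt.log hpt₀.ne'
  · filter_upwards [self_mem_nhdsWithin] with t ht using hasDerivAt_one_sub_rpow κ ht
  · filter_upwards [self_mem_nhdsWithin] with t ht
    exact mul_pos hκ (rpow_pos_of_pos (sub_pos.mpr ht) _)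
  · rw [← div_neg]
    refine (hlim.div_const (-κ)).congr' ?_
    filter_upwards [self_mem_nhdsWithin] with t ht
    have h1t : 0 < 1 - t := sub_pos.mpr ht
    rw [show -κ - 1 = -(1 + κ) by ring, rpow_neg h1t.le]
    have := (rpow_pos_of_pos h1t (1 + κ)).ne'
    field_simp

theorem tendsto_log_div_one_sub_rpow_neg_of_bounds {f : ℝ → ℝ} {k K d κ : ℝ} (hκ : 0 < κ)
    (hk : 0 < k) (hK : 0 < K)
    (hf : ∀ᶠ M in 𝓝[<] 1, k * (1 - M) ^ d ≤ f M ∧ f M ≤ K * (1 - M) ^ (-d)) :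
    Tendsto (fun M => log (f M) / (1 - M) ^ (-κ)) (𝓝[<] 1) (𝓝 0) := by
  have hlog : ∀ᶠ M in 𝓝[<] 1,
      log k + d * log (1 - M) ≤ log (f M) ∧ log (f M) ≤ log K - d * log (1 - M) := by
    filter_upwards [hf, self_mem_nhdsWithin] with M ⟨hlo, hhi⟩ hM
    have hu : 0 < 1 - M := sub_pos.mpr hM
    have hku : 0 < k * (1 - M) ^ d := by positivity
    constructor
    · calc log k + d * log (1 - M) = log (k * (1 - M) ^ d) := by
            rw [log_mul hk.ne' (rpow_pos_of_pos hu d).ne', log_rpow hu]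
        _ ≤ log (f M) := log_le_log hku hlo
    · calc log (f M) ≤ log (K * (1 - M) ^ (-d)) := log_le_log (hku.trans_le hlo) hhi
        _ = log K - d * log (1 - M) := by
            rw [log_mul hK.ne' (rpow_pos_of_pos hu _).ne', log_rpow hu]
            ring
  have hG := tendsto_one_sub_rpow_neg_atTop hκ
  have hL := tendsto_log_one_sub_div_one_sub_rpow_neg hκ
  have hlo : Tendsto (fun M => (log k + d * log (1 - M)) / (1 - M) ^ (-κ)) (𝓝[<] 1) (𝓝 0) := by
    simpa [add_div, mul_div_assoc] using
      (tendsto_const_nhds.div_atTop hG).add (hL.const_mul d)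
  have hhi : Tendsto (fun M => (log K - d * log (1 - M)) / (1 - M) ^ (-κ)) (𝓝[<] 1) (𝓝 0) := by
    simpa [sub_div, mul_div_assoc] using
      (tendsto_const_nhds.div_atTop hG).sub (hL.const_mul d)
  have hGpos : ∀ᶠ M : ℝ in 𝓝[<] 1, 0 ≤ (1 - M) ^ (-κ) := hG.eventually_ge_atTop 0
  refine tendsto_of_tendsto_of_tendsto_of_le_of_le' hlo hhi ?_ ?_
  · filter_upwards [hlog, hGpos] with M hM hGM using div_le_div_of_nonneg_right hM.1 hGM
  · filter_upwards [hlog, hGpos] with M hM hGM using div_le_div_of_nonneg_right hM.2 hGM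

theorem eventually_div_bounds_of_deriv_bounds {I P I' P' : ℝ → ℝ} {k K d : ℝ}
    (hk : 0 ≤ k) (hK : 0 ≤ K) (hd : 0 ≤ d)
    (hI : ∀ᶠ t in 𝓝[<] 1, HasDerivAt I (I' t) t) (hI₀ : ∀ᶠ t in 𝓝[<] 1, 0 ≤ I t)
    (hP : ∀ᶠ t in 𝓝[<] 1, HasDerivAt P (P' t) t) (hP' : ∀ᶠ t in 𝓝[<] 1, 0 ≤ P' t)
    (hPtop : Tendsto P (𝓝[<] 1) atTop)
    (hI' : ∀ᶠ t in 𝓝[<] 1,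
      k * (1 - t) ^ d * P' t ≤ I' t ∧ I' t ≤ K * (1 - t) ^ (-d) * P' t) :
    ∀ᶠ M in 𝓝[<] 1,
      k / 2 * (1 - M) ^ d ≤ I M / P M ∧ I M / P M ≤ (1 + K) * (1 - M) ^ (-d) := by
  obtain ⟨x, hx1, hx⟩ := mem_nhdsLT_iff_exists_Ioo_subset.mp <| hI.and <| hI₀.and <| hP.and <|
    hP'.and <| hI'.and <| (hPtop.eventually_ge_atTop 0).and (Ioo_mem_nhdsLT zero_lt_one)
  obtain ⟨y, hxy, hy1⟩ := exists_between (mem_Iio.mp hx1)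
  obtain ⟨-, hIy, -, -, -, hPy, hy0, -⟩ := hx ⟨hxy, hy1⟩
  filter_upwards [Ioo_mem_nhdsLT hy1, hPtop.eventually_ge_atTop (2 * P y),
    hPtop.eventually_ge_atTop (I y), hPtop.eventually_gt_atTop 0] with M hM hPM₂ hPMI hPM
  have hsub : Icc y M ⊆ Ioo x 1 := Icc_subset_Ioo hxy hM.2
  have hu : 0 < 1 - M := sub_pos.mpr hM.2
  have hu₁ : 1 - M ≤ 1 := by linarith [hy0, hM.1]
  have hPd : ∀ (C : ℝ), ∀ t ∈ Icc y M, HasDerivAt (fun t => C * P t) (C * P' t) t :=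
    fun C t ht => (hx (hsub ht)).2.2.1.const_mul C
  have hlow := sub_le_sub_of_hasDerivAt_le hM.1.le (hPd (k * (1 - M) ^ d))
    (fun t ht => (hx (hsub ht)).1) fun t ht => by
      obtain ⟨-, -, -, hP't, hI't, -⟩ := hx (hsub (Ico_subset_Icc_self ht))
      refine le_trans ?_ hI't.1
      gcongr
      exact ht.2.le
  have hup := sub_le_sub_of_hasDerivAt_le hM.1.le (fun t ht => (hx (hsub ht)).1)
    (hPd (K * (1 - M) ^ (-d))) fun t ht => by
      obtain ⟨-, -, -, hP't, hI't, -⟩ := hx (hsub (Ico_subset_Icc_self ht))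
      refine hI't.2.trans (mul_le_mul_of_nonneg_right (mul_le_mul_of_nonneg_left ?_ hK) hP't)
      exact rpow_le_rpow_of_nonpos hu (by linarith [ht.2]) (neg_nonpos.mpr hd)
  have hud : 1 ≤ (1 - M) ^ (-d) :=
    one_le_rpow_of_pos_of_le_one_of_nonpos hu hu₁ (neg_nonpos.mpr hd)
  constructor
  · rw [le_div_iff₀ hPM]
    nlinarith [mul_nonneg (mul_nonneg hk (rpow_nonneg hu.le d)) (sub_nonneg.mpr hPM₂)]
  · rw [div_le_iff₀ hPM]
    nlinarith [mul_nonneg (mul_nonneg hK (rpow_nonneg hu.le (-d))) hPy,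
      mul_nonneg (sub_nonneg.mpr hud) hPM.le]

/-- Used with `x = p t` and `y = p' t`, so that `y * (-2) * x ^ (-2 - 1)` is the derivative of
`p ^ (-2)` at `t`. -/
theorem integrand_bounds_by_deriv_rpow_neg_two {a b κ c t x y : ℝ} (ha : 0 ≤ a)
    (ht : 1 / 2 ≤ t) (ht₁ : t < 1) (hx : 0 < x)
    (hR : -(1 - t) ^ (1 + κ) * y / x ∈ Ioo (c / 2) (2 * c)) :
    0 ≤ y * (-2) * x ^ (-(2 : ℝ) - 1) ∧
    (1 / 2) ^ a / (4 * c) * (1 - t) ^ |1 + κ - b| * (y * (-2) * x ^ (-(2 : ℝ) - 1))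
      ≤ t ^ a * (1 - t) ^ (-b) * x ^ (-(2 : ℝ)) ∧
    t ^ a * (1 - t) ^ (-b) * x ^ (-(2 : ℝ))
      ≤ 1 / c * (1 - t) ^ (-|1 + κ - b|) * (y * (-2) * x ^ (-(2 : ℝ) - 1)) := by
  set s := 1 - t
  have hs : 0 < s := sub_pos.mpr ht₁
  have hs₁ : s ≤ 1 := by linarith
  set R := -s ^ (1 + κ) * y / x with hRdef
  have hc : 0 < c := by linarith [hR.1, hR.2]
  have hR₀ : 0 < R := by linarith [hR.1]
  have hsκ := (rpow_pos_of_pos hs (1 + κ)).ne'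
  have hD : y * (-2) * x ^ (-(2 : ℝ) - 1) = 2 * R * (s ^ (1 + κ))⁻¹ * x ^ (-(2 : ℝ)) := by
    rw [hRdef, rpow_sub_one hx.ne']
    field_simp
  have hg : t ^ a * s ^ (-b) * x ^ (-(2 : ℝ))
      = t ^ a * s ^ (1 + κ - b) / (2 * R) * (2 * R * (s ^ (1 + κ))⁻¹ * x ^ (-(2 : ℝ))) := by
    rw [show -b = (1 + κ - b) - (1 + κ) by ring, rpow_sub hs]
    field_simp
  rw [hD, hg]
  have hW : 0 < 2 * R * (s ^ (1 + κ))⁻¹ * x ^ (-(2 : ℝ)) := by positivity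
  refine ⟨hW.le, mul_le_mul_of_nonneg_right ?_ hW.le, mul_le_mul_of_nonneg_right ?_ hW.le⟩
  · calc (1 / 2) ^ a / (4 * c) * s ^ |1 + κ - b|
          = (1 / 2) ^ a * s ^ |1 + κ - b| / (2 * (2 * c)) := by ring
      _ ≤ t ^ a * s ^ (1 + κ - b) / (2 * R) := by
          gcongr ?_ * ?_ / (2 * ?_)
          · exact rpow_le_rpow (by norm_num) ht ha
          · exact rpow_le_rpow_of_exponent_ge hs hs₁ (le_abs_self _)
          · exact hR.2.le
  · calc t ^ a * s ^ (1 + κ - b) / (2 * R) ≤ 1 * s ^ (-|1 + κ - b|) / (2 * (c / 2)) := by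
          gcongr ?_ * ?_ / (2 * ?_)
          · exact rpow_le_one (by linarith) ht₁.le ha
          · exact rpow_le_rpow_of_exponent_ge hs hs₁ (neg_abs_le _)
          · exact hR.1.le
      _ = 1 / c * s ^ (-|1 + κ - b|) := by
          field_simp

theorem tendsto_nhdsGT_zero_of_tendsto_log_div {p G : ℝ → ℝ} {l : Filter ℝ} {L : ℝ}
    (hL : L < 0) (hpos : ∀ᶠ x in l, 0 < p x) (hG : Tendsto G l atTop)
    (h : Tendsto (fun x => log (p x) / G x) l (𝓝 L)) : Tendsto p l (𝓝[>] 0) := by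
  have hlog : Tendsto (fun x => log (p x)) l atBot := by
    refine (h.neg_mul_atTop hL hG).congr' ?_
    filter_upwards [hG.eventually_gt_atTop 0] with x hx using div_mul_cancel₀ _ hx.ne'
  refine (tendsto_exp_atBot_nhdsGT.comp hlog).congr' ?_
  filter_upwards [hpos] with x hx using exp_log hx

theorem exists_rpow_bounds_integral_div_rpow_neg_two {a b κ c : ℝ} {p p' : ℝ → ℝ}
    (ha : 0 ≤ a) (hc : 0 < c)
    (hpos : ∀ M ∈ Ico (0 : ℝ) 1, 0 < p M)
    (hderiv : ∀ M ∈ Ico (0 : ℝ) 1, HasDerivAt p (p' M) M)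
    (hPtop : Tendsto (fun M => p M ^ (-(2 : ℝ))) (𝓝[<] 1) atTop)
    (hlim : Tendsto (fun M => -(1 - M) ^ (1 + κ) * p' M / p M) (𝓝[<] 1) (𝓝 c)) :
    ∃ k K d : ℝ, 0 < k ∧ 0 < K ∧ ∀ᶠ M in 𝓝[<] 1,
      k * (1 - M) ^ d
        ≤ (∫ s in (0 : ℝ)..M, s ^ a * (1 - s) ^ (-b) * p s ^ (-(2 : ℝ))) / p M ^ (-(2 : ℝ)) ∧
      (∫ s in (0 : ℝ)..M, s ^ a * (1 - s) ^ (-b) * p s ^ (-(2 : ℝ))) / p M ^ (-(2 : ℝ))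
        ≤ K * (1 - M) ^ (-d) := by
  set g : ℝ → ℝ := fun s => s ^ a * (1 - s) ^ (-b) * p s ^ (-(2 : ℝ))
  have hg : ContinuousOn g (Ico 0 1) := by
    refine ((continuousOn_id.rpow_const fun _ _ => Or.inr ha).mul ?_).mul ?_
    · exact (continuousOn_const.sub continuousOn_id).rpow_const fun s hs =>
        Or.inl (sub_pos.mpr hs.2).ne'
    · exact (fun s hs => (hderiv s hs).continuousAt.continuousWithinAt.rpow_const
        (Or.inl (hpos s hs).ne'))
  have hI : ∀ M ∈ Ioo (0 : ℝ) 1, HasDerivAt (fun M => ∫ s in (0 : ℝ)..M, g s) (g M) M := by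
    intro M hM
    refine intervalIntegral.integral_hasDerivAt_right ?_
      ((hg.mono Ioo_subset_Ico_self).stronglyMeasurableAtFilter isOpen_Ioo M hM)
      (hg.continuousAt (mem_of_superset (isOpen_Ioo.mem_nhds hM) Ioo_subset_Ico_self))
    refine (hg.mono ?_).intervalIntegrable
    rw [uIcc_of_le hM.1.le]
    exact Icc_subset_Ico_right hM.2
  have hI₀ : ∀ M ∈ Ioo (0 : ℝ) 1, 0 ≤ ∫ s in (0 : ℝ)..M, g s := fun M hM =>
    intervalIntegral.integral_nonneg hM.1.le fun s hs => by
      have hps := hpos s ⟨hs.1, hs.2.trans_lt hM.2⟩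
      have hs₁ : 0 ≤ 1 - s := by linarith [hs.2, hM.2]
      exact mul_nonneg (mul_nonneg (rpow_nonneg hs.1 _) (rpow_nonneg hs₁ _)) (rpow_nonneg hps.le _)
  have hnear : ∀ᶠ t in 𝓝[<] 1, t ∈ Ioo (0 : ℝ) 1 := Ioo_mem_nhdsLT one_pos
  have hhalf : ∀ᶠ t in 𝓝[<] 1, t ∈ Ioo (1 / 2 : ℝ) 1 := Ioo_mem_nhdsLT (by norm_num)
  have hR := hlim.eventually (Ioo_mem_nhds (by linarith : c / 2 < c) (by linarith : c < 2 * c))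
  have hbounds := (hhalf.and hR).mono fun t ⟨ht, hRt⟩ =>
    integrand_bounds_by_deriv_rpow_neg_two (b := b) ha ht.1.le ht.2
      (hpos t ⟨by linarith [ht.1], ht.2⟩) hRt
  refine ⟨(1 / 2) ^ a / (4 * c) / 2, 1 + 1 / c, |1 + κ - b|, by positivity, by positivity,
    eventually_div_bounds_of_deriv_bounds (by positivity) (by positivity) (abs_nonneg _)
      (hnear.mono hI) (hnear.mono hI₀)
      (hnear.mono fun t ht => (hderiv t (Ioo_subset_Ico_self ht)).rpow_const
        (Or.inl (hpos t (Ioo_subset_Ico_self ht)).ne'))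
      (hbounds.mono fun t h => h.1) hPtop (hbounds.mono fun t h => h.2)⟩

theorem stmt_2_general (a b κ c : ℝ) (ha : 1 < a) (hκ : 0 < κ) (hc : 0 < c)
    (p p' q : ℝ → ℝ)
    (hpos : ∀ M ∈ Set.Ico (0:ℝ) 1, 0 < p M)
    (hderiv : ∀ M ∈ Set.Ico (0:ℝ) 1, HasDerivAt p (p' M) M)
    (hlim : Tendsto (fun M => -(1 - M) ^ (1 + κ) * p' M / p M)
      (nhdsWithin 1 (Set.Iio 1)) (nhds c))
    (hq : ∀ M ∈ Set.Ioo (0:ℝ) 1,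
      q M = (p M / M) * ∫ s in (0:ℝ)..M, s ^ a * (1 - s) ^ (-b) * (p s) ^ (-(2:ℝ))) :
    ∃ C₂ > 0, Tendsto (fun M => Real.log (q M / p M) / (1 - M) ^ (-κ))
      (nhdsWithin 1 (Set.Iio 1)) (nhds C₂) := by
  have hnear : ∀ᶠ M in 𝓝[<] 1, M ∈ Ioo (0 : ℝ) 1 := Ioo_mem_nhdsLT zero_lt_one
  have hG := tendsto_one_sub_rpow_neg_atTop hκ
  have hlogp := tendsto_log_div_one_sub_rpow_neg_of_logDeriv hκ
    (hnear.mono fun t ht => hderiv t (Ioo_subset_Ico_self ht))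
    (hnear.mono fun t ht => hpos t (Ioo_subset_Ico_self ht)) hlim
  have hPtop := (tendsto_rpow_neg_nhdsGT_zero (by norm_num : -(2 : ℝ) < 0)).comp <|
    tendsto_nhdsGT_zero_of_tendsto_log_div (neg_neg_of_pos (div_pos hc hκ))
      (hnear.mono fun t ht => hpos t (Ioo_subset_Ico_self ht)) hG hlogp
  obtain ⟨k, K, d, hk, hK, hbounds⟩ :=
    exists_rpow_bounds_integral_div_rpow_neg_two (b := b) (zero_le_one.trans ha.le) hc hpos hderiv
      hPtop hlim
  have hlogIP := tendsto_log_div_one_sub_rpow_neg_of_bounds hκ hk hK hbounds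
  have hlogM : Tendsto (fun M : ℝ => log M / (1 - M) ^ (-κ)) (𝓝[<] 1) (𝓝 0) :=
    (by simpa using (continuousAt_log one_ne_zero).tendsto.mono_left nhdsWithin_le_nhds :
      Tendsto log (𝓝[<] 1) (𝓝 0)).div_atTop hG
  refine ⟨2 * (c / κ), by positivity, ?_⟩
  have hsum := (hlogIP.sub (hlogp.const_mul 2)).sub hlogM
  rw [show (0 : ℝ) - 2 * -(c / κ) - 0 = 2 * (c / κ) by ring] at hsum
  refine hsum.congr' ?_
  filter_upwards [hnear, hbounds] with M hM hMb
  have hI := (mul_pos hk (rpow_pos_of_pos (sub_pos.mpr hM.2) d)).trans_le hMb.1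
  have hp := hpos M (Ioo_subset_Ico_self hM)
  have hP := rpow_pos_of_pos hp (-2)
  rw [hq M hM]
  set I := ∫ s in (0 : ℝ)..M, s ^ a * (1 - s) ^ (-b) * p s ^ (-(2 : ℝ))
  rw [show p M / M * I / p M = I / p M ^ (-(2 : ℝ)) * p M ^ (-(2 : ℝ)) / M by field_simp,
    log_div (mul_pos hI hP).ne' hM.1.ne', log_mul hI.ne' hP.ne', log_rpow hp]
  ring

theorem stmt_2 (a b κ c : ℝ) (ha : 1 < a) (hb : 1 < b) (hκ : 0 < κ) (hc : 0 < c)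
    (p p' q : ℝ → ℝ)
    (hcont : ContinuousOn p (Set.Icc 0 1))
    (hpos : ∀ M ∈ Set.Ico (0:ℝ) 1, 0 < p M)
    (hderiv : ∀ M ∈ Set.Ico (0:ℝ) 1, HasDerivAt p (p' M) M)
    (hdec : StrictAntiOn p (Set.Icc 0 1))
    (hp1 : p 1 = 0)
    (hlim : Tendsto (fun M => -(1 - M) ^ (1 + κ) * p' M / p M)
      (nhdsWithin 1 (Set.Iio 1)) (nhds c))
    (hq : ∀ M ∈ Set.Ioo (0:ℝ) 1,
      q M = (p M / M) * ∫ s in (0:ℝ)..M, s ^ a * (1 - s) ^ (-b) * (p s) ^ (-(2:ℝ))) :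
    ∃ C₂ > 0, Tendsto (fun M => Real.log (q M / p M) / (1 - M) ^ (-κ))
      (nhdsWithin 1 (Set.Iio 1)) (nhds C₂) :=
  stmt_2_general a b κ c ha hκ hc p p' q hpos hderiv hlim hq
end

section
/- Let n ≥ 1 and let u ∈ 𝒟 = {u ∈ (0,∞)ⁿ : Σᵢ uᵢ < 1}, with M = Σᵢ uᵢ. For any positive continuous function g : (0,1) → (0,∞), the n×n matrix 𝓗 with entries 𝓗ᵢⱼ = δᵢⱼ/uᵢ − 1/M + g(M) is symmetric and positive definite. -/
/-!
The matrix is `diag(1/uᵢ) + c·𝟙𝟙ᵀ` with `c = g(M) - 1/M`, whose quadratic form is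
`Q(x) + c S²` with `Q(x) = Σ xᵢ²/uᵢ` and `S = Σ xᵢ`. Cauchy–Schwarz with weights `uᵢ` gives
`S² ≤ M Q(x)`, so for `c < 0` the form is at least `(1 + cM) Q(x) = g(M) M Q(x) > 0`.
-/

namespace Matrix

variable {ι : Type*} [Fintype ι] [DecidableEq ι]

lemma dotProduct_diagonal_add_const_mulVec (d x : ι → ℝ) (c : ℝ) :
    x ⬝ᵥ ((diagonal d + of fun _ _ => c) *ᵥ x) = ∑ i, d i * x i ^ 2 + c * (∑ i, x i) ^ 2 := by
  rw [add_mulVec, dotProduct_add]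
  congr 1
  · simp only [dotProduct, mulVec_diagonal]
    exact Finset.sum_congr rfl fun i _ => by ring
  · simp only [dotProduct, mulVec, of_apply, ← Finset.mul_sum, ← Finset.sum_mul]
    ring

lemma posDef_diagonal_inv_add_const {u : ι → ℝ} (hu : ∀ i, 0 < u i) {c : ℝ}
    (hc : 0 < 1 + c * ∑ i, u i) : (diagonal u⁻¹ + of fun _ _ => c).PosDef := by
  refine posDef_iff_dotProduct_mulVec.2 ⟨?_, fun x hx => ?_⟩
  · refine (isHermitian_diagonal _).add ?_
    ext i j
    rfl
  rw [star_trivial, dotProduct_diagonal_add_const_mulVec]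
  simp only [Pi.inv_apply, inv_mul_eq_div]
  have hQ : 0 < ∑ i, x i ^ 2 / u i := by
    obtain ⟨i, hi⟩ := Function.ne_iff.1 hx
    exact Finset.sum_pos' (fun j _ => div_nonneg (sq_nonneg _) (hu j).le)
      ⟨i, Finset.mem_univ i, div_pos (sq_pos_of_ne_zero hi) (hu i)⟩
  have hCS : (∑ i, x i) ^ 2 ≤ (∑ i, x i ^ 2 / u i) * ∑ i, u i :=
    Finset.sum_sq_le_sum_mul_sum_of_sq_le_mul _
      (fun i _ => div_nonneg (sq_nonneg _) (hu i).le) (fun i _ => (hu i).le)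
      (fun i _ => (div_mul_cancel₀ _ (hu i).ne').ge)
  rcases le_or_gt 0 c with hc0 | hc0
  · positivity
  · nlinarith [mul_le_mul_of_nonpos_left hCS hc0.le, mul_pos hc hQ]

end Matrix

theorem stmt_4_general (n : ℕ) (hn : 1 ≤ n) (u : Fin n → ℝ) (hu : ∀ i, 0 < u i)
    (hM : ∑ i, u i < 1) (g : ℝ → ℝ)
    (hgpos : ∀ x ∈ Set.Ioo (0:ℝ) 1, 0 < g x) :
    (Matrix.of fun i j : Fin n =>
      (if i = j then 1 / u i else 0) - 1 / (∑ k, u k) + g (∑ k, u k)).PosDef := by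
  set M := ∑ k, u k
  have hMpos : 0 < M := Finset.sum_pos (fun i _ => hu i) ⟨⟨0, hn⟩, Finset.mem_univ _⟩
  have hgM : 0 < g M := hgpos M ⟨hMpos, hM⟩
  have hmatrix : (Matrix.of fun i j : Fin n => (if i = j then 1 / u i else 0) - 1 / M + g M) =
      Matrix.diagonal u⁻¹ + Matrix.of fun _ _ => g M - 1 / M := by
    ext i j
    simp only [Matrix.of_apply, Matrix.add_apply, Matrix.diagonal_apply, Pi.inv_apply, one_div]
    ring
  rw [hmatrix]
  refine Matrix.posDef_diagonal_inv_add_const hu ?_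
  calc (0 : ℝ) < g M * M := mul_pos hgM hMpos
    _ = 1 + (g M - 1 / M) * M := by field_simp; ring

theorem stmt_4 (n : ℕ) (hn : 1 ≤ n) (u : Fin n → ℝ) (hu : ∀ i, 0 < u i)
    (hM : ∑ i, u i < 1) (g : ℝ → ℝ)
    (hgcont : ContinuousOn g (Set.Ioo 0 1))
    (hgpos : ∀ x ∈ Set.Ioo (0:ℝ) 1, 0 < g x) :
    (Matrix.of fun i j : Fin n =>
      (if i = j then 1 / u i else 0) - 1 / (∑ k, u k) + g (∑ k, u k)).PosDef :=
  stmt_4_general n hn u hu hM g hgpos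
end

section
/- Let a, b > 1, κ > 0, and let p, q satisfy the standing biofilm model assumptions. Define f(M) = √(q(M)/p(M)). Then for all 0 < M < 1 one has 2 f'(M)/f(M) = M^a (1-M)^{-b} p(M)^{-2} / ∫₀^M s^a (1-s)^{-b} p(s)^{-2} ds − 1/M ≥ a/M; in particular f'(M) > 0 for all 0 < M < 1. -/
/-! Writing `I(M) = ∫₀^M s^a w(s) ds` with `w(s) = (1-s)^{-b} p(s)^{-2}`, one has
`f = √(I(M)/M)`, so `2 f'/f = (log (I(M)/M))' = M^a w(M)/I(M) - 1/M`. Since `w` is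
increasing, `I(M) ≤ w(M) ∫₀^M s^a ds = M^{a+1} w(M)/(a+1)`, hence `M^a w(M)/I(M) ≥ (a+1)/M`
and `2 f'/f ≥ a/M > 0`. -/

open Real Set Filter MeasureTheory

theorem hasDerivAt_integral_of_continuousOn_Ico_s6 {g : ℝ → ℝ} {c d M : ℝ}
    (hg : ContinuousOn g (Ico c d)) (hM : M ∈ Ioo c d) :
    HasDerivAt (fun u => ∫ s in c..u, g s) (g M) M := by
  have hsub : uIcc c M ⊆ Ico c d := by
    rw [uIcc_of_le hM.1.le]
    exact Icc_subset_Ico_right hM.2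
  exact intervalIntegral.integral_hasDerivAt_right ((hg.mono hsub).intervalIntegrable)
    ((hg.mono Ioo_subset_Ico_self).stronglyMeasurableAtFilter isOpen_Ioo M hM)
    (hg.continuousAt (mem_of_superset (Ioo_mem_nhds hM.1 hM.2) Ioo_subset_Ico_self))

theorem integral_rpow_mul_le_of_monotoneOn {a M : ℝ} {w : ℝ → ℝ}
    (ha : -1 < a) (hM : 0 ≤ M) (hw : MonotoneOn w (Icc 0 M))
    (hint : IntervalIntegrable (fun s => s ^ a * w s) volume 0 M) :
    ∫ s in (0:ℝ)..M, s ^ a * w s ≤ M ^ (a + 1) / (a + 1) * w M := by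
  have hint' : IntervalIntegrable (fun s : ℝ => s ^ a * w M) volume 0 M :=
    (intervalIntegral.intervalIntegrable_rpow' ha).mul_const _
  calc ∫ s in (0:ℝ)..M, s ^ a * w s
      ≤ ∫ s in (0:ℝ)..M, s ^ a * w M := by
        refine intervalIntegral.integral_mono_on hM hint hint' fun s hs => ?_
        exact mul_le_mul_of_nonneg_left (hw hs (right_mem_Icc.2 hM) hs.2) (rpow_nonneg hs.1 a)
    _ = M ^ (a + 1) / (a + 1) * w M := by
        rw [intervalIntegral.integral_mul_const, integral_rpow (Or.inl ha),
          zero_rpow (by linarith), sub_zero]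

theorem add_one_div_le_rpow_mul_div_integral {a M : ℝ} {w : ℝ → ℝ}
    (ha : -1 < a) (hM : 0 < M) (hw : MonotoneOn w (Icc 0 M))
    (hint : IntervalIntegrable (fun s => s ^ a * w s) volume 0 M)
    (hpos : 0 < ∫ s in (0:ℝ)..M, s ^ a * w s) :
    (a + 1) / M ≤ M ^ a * w M / ∫ s in (0:ℝ)..M, s ^ a * w s := by
  have hle := integral_rpow_mul_le_of_monotoneOn ha hM.le hw hint
  rw [rpow_add_one hM.ne', div_mul_eq_mul_div, le_div_iff₀ (by linarith)] at hle
  rw [div_le_div_iff₀ hM hpos]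
  linarith

theorem two_mul_div_eq_of_eventuallyEq_sqrt_div {I f : ℝ → ℝ} {g f' M : ℝ}
    (hI : HasDerivAt I g M) (hIM : 0 < I M) (hM : 0 < M)
    (hf : f =ᶠ[nhds M] fun u => √(I u / u)) (hf' : HasDerivAt f f' M) :
    2 * f' / f M = g / I M - 1 / M := by
  have hq : 0 < I M / M := div_pos hIM hM
  have hquot : HasDerivAt (fun u => I u / u) ((g * M - I M * 1) / M ^ 2) M :=
    hI.div (hasDerivAt_id M) hM.ne'
  have hderiv := (hquot.sqrt hq.ne').congr_of_eventuallyEq hf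
  have hsq : √(I M / M) ^ 2 = I M / M := sq_sqrt hq.le
  rw [hf'.unique hderiv, hf.eq_of_nhds]
  field_simp
  rw [hsq]
  field_simp

section Weight

variable {p : ℝ → ℝ} {b : ℝ}

theorem continuousOn_weight (hpc : ContinuousOn p (Ico 0 1))
    (hpos : ∀ s ∈ Ico (0:ℝ) 1, 0 < p s) :
    ContinuousOn (fun s => (1 - s) ^ (-b) * p s ^ (-(2:ℝ))) (Ico 0 1) := fun s hs =>
  ((continuousWithinAt_const.sub continuousWithinAt_id).rpow_const
      (Or.inl (sub_ne_zero.2 hs.2.ne'))).mul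
    ((hpc s hs).rpow_const (Or.inl (hpos s hs).ne'))

theorem monotoneOn_weight (hb : 0 ≤ b) (hpos : ∀ s ∈ Ico (0:ℝ) 1, 0 < p s)
    (hdec : AntitoneOn p (Ico 0 1)) :
    MonotoneOn (fun s => (1 - s) ^ (-b) * p s ^ (-(2:ℝ))) (Ico 0 1) := by
  intro s hs t ht hst
  exact mul_le_mul
    (rpow_le_rpow_of_nonpos (by linarith [ht.2]) (by linarith) (by linarith))
    (rpow_le_rpow_of_nonpos (hpos t ht) (hdec hs ht hst) (by norm_num))
    (rpow_pos_of_pos (hpos s hs) _).le (rpow_pos_of_pos (sub_pos.2 ht.2) _).le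

theorem weight_pos (hpos : ∀ s ∈ Ico (0:ℝ) 1, 0 < p s) {s : ℝ} (hs : s ∈ Ico (0:ℝ) 1) :
    0 < (1 - s) ^ (-b) * p s ^ (-(2:ℝ)) :=
  mul_pos (rpow_pos_of_pos (sub_pos.2 hs.2) _) (rpow_pos_of_pos (hpos s hs) _)

end Weight

theorem stmt_6_general (a b : ℝ) (ha : 1 < a) (hb : 1 < b)
    (p q f f' : ℝ → ℝ)
    (hpc : ContinuousOn p (Set.Ico 0 1))
    (hpos : ∀ M ∈ Set.Ico (0:ℝ) 1, 0 < p M)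
    (hdec : AntitoneOn p (Set.Ico 0 1))
    (hq : ∀ M ∈ Set.Ioo (0:ℝ) 1,
      q M = (p M / M) * ∫ s in (0:ℝ)..M, s ^ a * (1 - s) ^ (-b) * (p s) ^ (-(2:ℝ)))
    (hf : ∀ M ∈ Set.Ioo (0:ℝ) 1, f M = Real.sqrt (q M / p M))
    (hf' : ∀ M ∈ Set.Ioo (0:ℝ) 1, HasDerivAt f (f' M) M) :
    ∀ M ∈ Set.Ioo (0:ℝ) 1,
      (2 * f' M / f M = M ^ a * (1 - M) ^ (-b) * (p M) ^ (-(2:ℝ)) /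
          (∫ s in (0:ℝ)..M, s ^ a * (1 - s) ^ (-b) * (p s) ^ (-(2:ℝ))) - 1 / M) ∧
      a / M ≤ 2 * f' M / f M ∧ 0 < f' M := by
  intro M hM
  set w : ℝ → ℝ := fun s => (1 - s) ^ (-b) * p s ^ (-(2:ℝ))
  set I : ℝ → ℝ := fun u => ∫ s in (0:ℝ)..u, s ^ a * w s
  simp only [mul_assoc] at hq ⊢
  have hsub : Icc 0 M ⊆ Ico (0:ℝ) 1 := Icc_subset_Ico_right hM.2
  have hgc : ContinuousOn (fun s => s ^ a * w s) (Ico 0 1) :=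
    (continuous_rpow_const (by linarith)).continuousOn.mul (continuousOn_weight hpc hpos)
  have hint : IntervalIntegrable (fun s => s ^ a * w s) volume 0 M :=
    (hgc.mono (uIcc_of_le hM.1.le ▸ hsub)).intervalIntegrable
  have hIpos : 0 < I M := intervalIntegral.intervalIntegral_pos_of_pos_on hint
    (fun s hs => mul_pos (rpow_pos_of_pos hs.1 a) (weight_pos hpos (hsub (Ioo_subset_Icc_self hs))))
    hM.1
  have hfI : f =ᶠ[nhds M] fun u => √(I u / u) := by
    filter_upwards [Ioo_mem_nhds hM.1 hM.2] with u hu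
    rw [hf u hu, hq u hu, mul_div_right_comm,
      div_div_cancel_left' (hpos u (Ioo_subset_Ico_self hu)).ne', ← div_eq_inv_mul]
  have hlog : 2 * f' M / f M = M ^ a * w M / I M - 1 / M :=
    two_mul_div_eq_of_eventuallyEq_sqrt_div (hasDerivAt_integral_of_continuousOn_Ico_s6 hgc hM)
      hIpos hM.1 hfI (hf' M hM)
  have hbound : a / M ≤ 2 * f' M / f M := by
    have hratio := add_one_div_le_rpow_mul_div_integral (by linarith) hM.1
      ((monotoneOn_weight (by linarith) hpos hdec).mono hsub) hint hIpos
    rw [add_div] at hratio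
    linarith
  have hfpos : 0 < f M := hfI.eq_of_nhds ▸ sqrt_pos.2 (div_pos hIpos hM.1)
  have h2f'pos := (div_pos_iff_of_pos_right hfpos).1 ((div_pos (by linarith) hM.1).trans_le hbound)
  exact ⟨hlog, hbound, by linarith⟩

theorem stmt_6 (a b κ : ℝ) (ha : 1 < a) (hb : 1 < b) (hκ : 0 < κ)
    (p q f f' : ℝ → ℝ)
    (hpc : ContinuousOn p (Set.Ico 0 1))
    (hpos : ∀ M ∈ Set.Ico (0:ℝ) 1, 0 < p M)
    (hdec : AntitoneOn p (Set.Ico 0 1))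
    (hq : ∀ M ∈ Set.Ioo (0:ℝ) 1,
      q M = (p M / M) * ∫ s in (0:ℝ)..M, s ^ a * (1 - s) ^ (-b) * (p s) ^ (-(2:ℝ)))
    (hf : ∀ M ∈ Set.Ioo (0:ℝ) 1, f M = Real.sqrt (q M / p M))
    (hf' : ∀ M ∈ Set.Ioo (0:ℝ) 1, HasDerivAt f (f' M) M) :
    ∀ M ∈ Set.Ioo (0:ℝ) 1,
      (2 * f' M / f M = M ^ a * (1 - M) ^ (-b) * (p M) ^ (-(2:ℝ)) /
          (∫ s in (0:ℝ)..M, s ^ a * (1 - s) ^ (-b) * (p s) ^ (-(2:ℝ))) - 1 / M) ∧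
      a / M ≤ 2 * f' M / f M ∧ 0 < f' M :=
  stmt_6_general a b ha hb p q f f' hpc hpos hdec hq hf hf'
end

section
/- Let a, b > 1, κ > 0, and let p, q satisfy the standing biofilm assumptions (p decreasing, p(1)=0, lim_{M→1} -(1-M)^{1+κ} p'(M)/p(M) = c > 0, q(M) = (p(M)/M) ∫₀^M s^a (1-s)^{-b} p(s)^{-2} ds). Define f(M) = √(q(M)/p(M)). Then there exists a constant C > 0 such that p(M)² f'(M) (M f'(M) + f(M)) ≥ C M^{a-1} / (1-M)^{1+b+κ} for all 0 < M < 1. -/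
open Real Set Filter Topology MeasureTheory

/-!
Write `w(s) = (1 - s)^(-b) p(s)^(-2)` (`Biofilm.weight`) and `g(M) = ∫₀^M s^a w(s) ds`
(`Biofilm.weightIntegral`), so that `q = p g / M` and `f = √(g / M)`. With
`T = M g'(M) = M^(a+1) w(M)` one computes `p² f' (M f' + f) = p² (T² - g²) / (4 M² g)`.
Since `w` is increasing, `g ≤ T / (a + 1)`, hence `T² - g² ≥ (1 - (a + 1)⁻²) T²`. Near `M = 1` the
hypothesis on `p' / p` gives `((1 - M)^(1+κ) w)' ≥ (c / 2) w ≥ (c / 2) g'`, so `g ≲ (1 - M)^(1+κ) w`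
there, while away from `1` the bound `g ≤ T / (a + 1)` suffices. Thus `g ≲ (1 - M)^(1+κ) T` on
`(0, 1)`, and the expression is `≳ p² T / (M² (1 - M)^(1+κ)) = M^(a-1) (1 - M)^(-(1+b+κ))`.
-/

lemma deriv_mul_mul_deriv_add_of_eq_sqrt_div {g f : ℝ → ℝ} {M G f' : ℝ} (hM : 0 < M)
    (hg : HasDerivAt g G M) (hgM : 0 < g M) (hf : f =ᶠ[𝓝 M] fun x => √(g x / x))
    (hf' : HasDerivAt f f' M) :
    f' * (M * f' + f M) = ((M * G) ^ 2 - g M ^ 2) / (4 * M ^ 2 * g M) := by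
  have hquot : 0 < g M / M := div_pos hgM hM
  have hderiv := ((hg.div (hasDerivAt_id M) hM.ne').sqrt hquot.ne').congr_of_eventuallyEq hf
  rw [hf'.unique hderiv, hf.eq_of_nhds]
  simp only [Pi.div_apply, id, mul_one]
  set u := √(g M / M) with hu
  have hupos : 0 < u := Real.sqrt_pos.mpr hquot
  have hgu : g M = M * u ^ 2 := by
    rw [hu, Real.sq_sqrt hquot.le]; field_simp
  rw [hgu]
  field_simp
  ring

lemma mul_sq_div_le_sq_sub_sq_div {g T D θ : ℝ} (hg : 0 < g) (hgT : g ≤ θ * T) (hgD : g ≤ D)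
    (hθ₀ : 0 ≤ θ) (hθ₁ : θ ≤ 1) : (1 - θ ^ 2) * T ^ 2 / D ≤ (T ^ 2 - g ^ 2) / g := by
  have hθ : 0 ≤ 1 - θ ^ 2 := by nlinarith
  calc (1 - θ ^ 2) * T ^ 2 / D ≤ (1 - θ ^ 2) * T ^ 2 / g :=
        div_le_div_of_nonneg_left (by positivity) hg hgD
    _ ≤ (T ^ 2 - g ^ 2) / g := by
        gcongr
        nlinarith [mul_le_mul hgT hgT hg.le (hg.le.trans hgT)]

lemma integral_rpow_mul_le {a M : ℝ} {w : ℝ → ℝ} (ha : -1 < a) (hM : 0 ≤ M)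
    (hw : MonotoneOn w (Icc 0 M)) (hint : IntervalIntegrable (fun s => s ^ a * w s) volume 0 M) :
    ∫ s in (0:ℝ)..M, s ^ a * w s ≤ (a + 1)⁻¹ * (M ^ (a + 1) * w M) := by
  calc ∫ s in (0:ℝ)..M, s ^ a * w s ≤ ∫ s in (0:ℝ)..M, s ^ a * w M := by
        refine intervalIntegral.integral_mono_on hM hint ?_ fun s hs => ?_
        · exact (intervalIntegral.intervalIntegrable_rpow' ha).mul_const _
        · exact mul_le_mul_of_nonneg_left (hw hs ⟨hM, le_rfl⟩ hs.2) (rpow_nonneg hs.1 a)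
    _ = (a + 1)⁻¹ * (M ^ (a + 1) * w M) := by
        rw [intervalIntegral.integral_mul_const, integral_rpow (Or.inl ha),
          zero_rpow (by linarith : a + 1 ≠ 0), sub_zero, div_eq_inv_mul, mul_assoc]

lemma le_of_hasDerivAt_le_of_le {f g f' g' : ℝ → ℝ} {a b : ℝ}
    (hf : ∀ x ∈ Icc a b, HasDerivAt f (f' x) x) (hg : ∀ x ∈ Icc a b, HasDerivAt g (g' x) x)
    (ha : f a ≤ g a) (hfg : ∀ x ∈ Ico a b, f' x ≤ g' x) (hab : a ≤ b) : f b ≤ g b :=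
  image_le_of_deriv_right_le_deriv_boundary
    (fun x hx => (hf x hx).continuousAt.continuousWithinAt)
    (fun x hx => (hf x (Ico_subset_Icc_self hx)).hasDerivWithinAt) ha
    (fun x hx => (hg x hx).continuousAt.continuousWithinAt)
    (fun x hx => (hg x (Ico_subset_Icc_self hx)).hasDerivWithinAt) hfg ⟨hab, le_rfl⟩

namespace Biofilm

noncomputable def weight (b : ℝ) (p : ℝ → ℝ) (s : ℝ) : ℝ := (1 - s) ^ (-b) * p s ^ (-(2:ℝ))

noncomputable def weightIntegral (a b : ℝ) (p : ℝ → ℝ) (M : ℝ) : ℝ :=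
  ∫ s in (0:ℝ)..M, s ^ a * weight b p s

variable {b κ : ℝ} {p : ℝ → ℝ} {s : ℝ}

lemma weight_pos (hs : s < 1) (hp : 0 < p s) : 0 < weight b p s :=
  mul_pos (rpow_pos_of_pos (sub_pos.mpr hs) _) (rpow_pos_of_pos hp _)

lemma continuousAt_weight (hs : s < 1) (hp : p s ≠ 0) (hpc : ContinuousAt p s) :
    ContinuousAt (weight b p) s :=
  ((continuousAt_const.sub continuousAt_id).rpow_const (Or.inl (sub_pos.mpr hs).ne')).mul
    (hpc.rpow_const (Or.inl hp))

lemma monotoneOn_weight (hb : 0 ≤ b) (hpos : ∀ s ∈ Ico (0:ℝ) 1, 0 < p s)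
    (hdec : AntitoneOn p (Ico 0 1)) : MonotoneOn (weight b p) (Ico 0 1) := by
  intro s hs t ht hst
  have ht1 : 0 < 1 - t := sub_pos.mpr ht.2
  exact mul_le_mul (rpow_le_rpow_of_nonpos ht1 (by linarith) (neg_nonpos.mpr hb))
    (rpow_le_rpow_of_nonpos (hpos t ht) (hdec hs ht hst) (by norm_num))
    (rpow_nonneg (hpos s hs).le _) (rpow_nonneg ht1.le _)

lemma hasDerivAt_one_sub_rpow_mul_weight {p' : ℝ} (hs : s < 1) (hp : p s ≠ 0)
    (hp' : HasDerivAt p p' s) :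
    HasDerivAt (fun x => (1 - x) ^ (1 + κ) * weight b p x)
      (weight b p s * ((b - 1 - κ) * (1 - s) ^ κ + 2 * (-(1 - s) ^ (1 + κ) * p' / p s))) s := by
  have h1s : 1 - s ≠ 0 := (sub_pos.mpr hs).ne'
  have hsub : HasDerivAt (fun x : ℝ => 1 - x) (-1) s := (hasDerivAt_id s).const_sub 1
  have hderiv := (hsub.rpow_const (p := 1 + κ) (Or.inl h1s)).mul
    ((hsub.rpow_const (p := -b) (Or.inl h1s)).mul (hp'.rpow_const (p := -(2:ℝ)) (Or.inl hp)))
  refine hderiv.congr_deriv ?_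
  simp only [weight, Pi.mul_apply]
  rw [rpow_sub_one h1s, rpow_sub_one h1s, rpow_sub_one hp, rpow_add (sub_pos.mpr hs), rpow_one]
  field_simp
  ring

lemma exists_half_mul_weight_le {c : ℝ} {p' : ℝ → ℝ} (hκ : 0 < κ) (hc : 0 < c)
    (hpos : ∀ s ∈ Ico (0:ℝ) 1, 0 < p s)
    (hlim : Tendsto (fun M => -(1 - M) ^ (1 + κ) * p' M / p M) (𝓝[<] 1) (𝓝 c)) :
    ∃ M₀ ∈ Ioo (0:ℝ) 1, ∀ x ∈ Ico M₀ 1, c / 2 * weight b p x ≤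
      weight b p x * ((b - 1 - κ) * (1 - x) ^ κ + 2 * (-(1 - x) ^ (1 + κ) * p' x / p x)) := by
  have hsmall : Tendsto (fun s : ℝ => (1 + κ - b) * (1 - s) ^ κ) (𝓝[<] 1) (𝓝 0) := by
    have h : ContinuousAt (fun s : ℝ => (1 + κ - b) * (1 - s) ^ κ) 1 :=
      continuousAt_const.mul ((continuousAt_const.sub continuousAt_id).rpow_const (Or.inr hκ.le))
    simpa [zero_rpow hκ.ne'] using h.tendsto.mono_left nhdsWithin_le_nhds
  obtain ⟨l, hl, hsub⟩ := (mem_nhdsLT_iff_exists_mem_Ico_Ioo_subset zero_lt_one).mp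
    ((hlim.eventually_const_lt (half_lt_self hc)).and (hsmall.eventually_lt_const (half_pos hc)))
  refine ⟨(l + 1) / 2, ⟨by linarith [hl.1], by linarith [hl.2]⟩, fun x hx => ?_⟩
  have hlx : l < x := by linarith [hl.2, hx.1]
  obtain ⟨hlog, hκsmall⟩ := hsub ⟨hlx, hx.2⟩
  rw [mul_comm]
  exact mul_le_mul_of_nonneg_left (by linarith)
    (weight_pos hx.2 (hpos x ⟨hl.1.trans hlx.le, hx.2⟩)).le

lemma exists_le_mul_one_sub_rpow_mul_weight {a c : ℝ} {p' g : ℝ → ℝ} (ha : 0 ≤ a) (hκ : 0 < κ)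
    (hc : 0 < c) (hpos : ∀ s ∈ Ico (0:ℝ) 1, 0 < p s)
    (hderiv : ∀ s ∈ Ico (0:ℝ) 1, HasDerivAt p (p' s) s)
    (hlim : Tendsto (fun M => -(1 - M) ^ (1 + κ) * p' M / p M) (𝓝[<] 1) (𝓝 c))
    (hg : ∀ M ∈ Ioo (0:ℝ) 1, HasDerivAt g (M ^ a * weight b p M) M) :
    ∃ M₀ ∈ Ioo (0:ℝ) 1, ∃ K > 0, ∀ M ∈ Ico M₀ 1,
      g M ≤ K * ((1 - M) ^ (1 + κ) * weight b p M) := by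
  obtain ⟨M₀, hM₀, hΦ'⟩ := exists_half_mul_weight_le (b := b) hκ hc hpos hlim
  set Φ := fun x => (1 - x) ^ (1 + κ) * weight b p x
  have hmem : ∀ x ∈ Ico M₀ 1, x ∈ Ico (0:ℝ) 1 := fun x hx => ⟨hM₀.1.le.trans hx.1, hx.2⟩
  have hΦ := fun x (hx : x ∈ Ico M₀ 1) => hasDerivAt_one_sub_rpow_mul_weight (b := b) (κ := κ) hx.2
    (hpos x (hmem x hx)).ne' (hderiv x (hmem x hx))
  have hΦM₀ : 0 < Φ M₀ := mul_pos (rpow_pos_of_pos (sub_pos.mpr hM₀.2) _)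
    (weight_pos hM₀.2 (hpos M₀ (hmem M₀ ⟨le_rfl, hM₀.2⟩)))
  -- on `[M₀, 1)` we have `g' ≤ weight ≤ (2 / c) Φ'`, and `K` makes `g ≤ K Φ` hold at `M₀`
  set K := max (2 / c) (g M₀ / Φ M₀)
  refine ⟨M₀, hM₀, K, lt_max_of_lt_left (by positivity), fun M hM => ?_⟩
  have hIcc : ∀ x ∈ Icc M₀ M, x ∈ Ico M₀ 1 := fun x hx => ⟨hx.1, hx.2.trans_lt hM.2⟩
  refine le_of_hasDerivAt_le_of_le (fun x hx => hg x ⟨hM₀.1.trans_le hx.1, (hIcc x hx).2⟩)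
    (fun x hx => (hΦ x (hIcc x hx)).const_mul K) ?_ (fun x hx => ?_) hM.1
  · calc g M₀ = g M₀ / Φ M₀ * Φ M₀ := (div_mul_cancel₀ _ hΦM₀.ne').symm
      _ ≤ K * Φ M₀ := mul_le_mul_of_nonneg_right (le_max_right _ _) hΦM₀.le
  · have hx := hIcc x (Ico_subset_Icc_self hx)
    have hw := (weight_pos (b := b) hx.2 (hpos x (hmem x hx))).le
    have hΦ'x := hΦ' x hx
    calc x ^ a * weight b p x ≤ 1 * weight b p x :=
          mul_le_mul_of_nonneg_right (rpow_le_one (hmem x hx).1 hx.2.le ha) hw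
      _ = 2 / c * (c / 2 * weight b p x) := by field_simp
      _ ≤ 2 / c * _ := by gcongr
      _ ≤ K * _ := mul_le_mul_of_nonneg_right (le_max_left _ _) (by nlinarith)

section WeightIntegral

variable {a : ℝ} {p' : ℝ → ℝ} {M : ℝ}

lemma continuousOn_rpow_mul_weight (ha : 0 ≤ a) (hpos : ∀ s ∈ Ico (0:ℝ) 1, 0 < p s)
    (hderiv : ∀ s ∈ Ico (0:ℝ) 1, HasDerivAt p (p' s) s) :
    ContinuousOn (fun s => s ^ a * weight b p s) (Ico 0 1) := fun s hs =>
  ((continuousAt_rpow_const s a (Or.inr ha)).mul (continuousAt_weight hs.2 (hpos s hs).ne'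
    (hderiv s hs).continuousAt)).continuousWithinAt

lemma intervalIntegrable_rpow_mul_weight (ha : 0 ≤ a) (hpos : ∀ s ∈ Ico (0:ℝ) 1, 0 < p s)
    (hderiv : ∀ s ∈ Ico (0:ℝ) 1, HasDerivAt p (p' s) s) (hM : M ∈ Ico (0:ℝ) 1) :
    IntervalIntegrable (fun s => s ^ a * weight b p s) volume 0 M :=
  ((continuousOn_rpow_mul_weight ha hpos hderiv).mono
    (ordConnected_Ico.uIcc_subset ⟨le_rfl, one_pos⟩ hM)).intervalIntegrable

lemma hasDerivAt_weightIntegral (ha : 0 ≤ a) (hpos : ∀ s ∈ Ico (0:ℝ) 1, 0 < p s)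
    (hderiv : ∀ s ∈ Ico (0:ℝ) 1, HasDerivAt p (p' s) s) (hM : M ∈ Ioo (0:ℝ) 1) :
    HasDerivAt (weightIntegral a b p) (M ^ a * weight b p M) M := by
  have hcont := (continuousOn_rpow_mul_weight (b := b) ha hpos hderiv).mono Ioo_subset_Ico_self
  exact intervalIntegral.integral_hasDerivAt_right
    (intervalIntegrable_rpow_mul_weight ha hpos hderiv ⟨hM.1.le, hM.2⟩)
    (hcont.stronglyMeasurableAtFilter isOpen_Ioo M hM) (hcont.continuousAt (isOpen_Ioo.mem_nhds hM))

lemma weightIntegral_pos (ha : 0 ≤ a) (hpos : ∀ s ∈ Ico (0:ℝ) 1, 0 < p s)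
    (hderiv : ∀ s ∈ Ico (0:ℝ) 1, HasDerivAt p (p' s) s) (hM : M ∈ Ioo (0:ℝ) 1) :
    0 < weightIntegral a b p M :=
  intervalIntegral.intervalIntegral_pos_of_pos_on
    (intervalIntegrable_rpow_mul_weight ha hpos hderiv ⟨hM.1.le, hM.2⟩)
    (fun s hs => mul_pos (rpow_pos_of_pos hs.1 a)
      (weight_pos (hs.2.trans hM.2) (hpos s ⟨hs.1.le, hs.2.trans hM.2⟩))) hM.1

lemma weightIntegral_le (ha : 0 ≤ a) (hb : 0 ≤ b) (hpos : ∀ s ∈ Ico (0:ℝ) 1, 0 < p s)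
    (hderiv : ∀ s ∈ Ico (0:ℝ) 1, HasDerivAt p (p' s) s) (hdec : AntitoneOn p (Ico 0 1))
    (hM : M ∈ Ico (0:ℝ) 1) :
    weightIntegral a b p M ≤ (a + 1)⁻¹ * (M ^ (a + 1) * weight b p M) :=
  integral_rpow_mul_le (by linarith) hM.1
    ((monotoneOn_weight hb hpos hdec).mono fun _ hs => ⟨hs.1, hs.2.trans_lt hM.2⟩)
    (intervalIntegrable_rpow_mul_weight ha hpos hderiv hM)

lemma exists_weightIntegral_le {c : ℝ} (ha : 0 ≤ a) (hb : 0 ≤ b) (hκ : 0 < κ) (hc : 0 < c)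
    (hpos : ∀ s ∈ Ico (0:ℝ) 1, 0 < p s) (hderiv : ∀ s ∈ Ico (0:ℝ) 1, HasDerivAt p (p' s) s)
    (hdec : AntitoneOn p (Ico 0 1))
    (hlim : Tendsto (fun M => -(1 - M) ^ (1 + κ) * p' M / p M) (𝓝[<] 1) (𝓝 c)) :
    ∃ C > 0, ∀ M ∈ Ioo (0:ℝ) 1,
      weightIntegral a b p M ≤ C * (1 - M) ^ (1 + κ) * (M ^ (a + 1) * weight b p M) := by
  obtain ⟨M₀, hM₀, K, hK, hnear⟩ := exists_le_mul_one_sub_rpow_mul_weight ha hκ hc hpos hderiv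
    hlim fun M hM => hasDerivAt_weightIntegral (b := b) ha hpos hderiv hM
  have hM₀a : 0 < M₀ ^ (a + 1) := rpow_pos_of_pos hM₀.1 _
  have h1M₀ : 0 < (1 - M₀) ^ (1 + κ) := rpow_pos_of_pos (sub_pos.mpr hM₀.2) _
  set C₁ := K / M₀ ^ (a + 1)
  set C₂ := ((a + 1) * (1 - M₀) ^ (1 + κ))⁻¹
  refine ⟨max C₁ C₂, lt_max_of_lt_right (by positivity), fun M hM => ?_⟩
  have hw := (weight_pos (b := b) hM.2 (hpos M ⟨hM.1.le, hM.2⟩)).le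
  have h1M : 0 ≤ 1 - M := sub_nonneg.mpr hM.2.le
  have hT : 0 ≤ M ^ (a + 1) * weight b p M := mul_nonneg (rpow_nonneg hM.1.le _) hw
  have hX : 0 ≤ (1 - M) ^ (1 + κ) * (M ^ (a + 1) * weight b p M) :=
    mul_nonneg (rpow_nonneg h1M _) hT
  rw [mul_assoc]
  rcases le_or_gt M₀ M with hM₀M | hMM₀
  · calc weightIntegral a b p M ≤ K * ((1 - M) ^ (1 + κ) * weight b p M) := hnear M ⟨hM₀M, hM.2⟩
      _ = C₁ * ((1 - M) ^ (1 + κ) * (M₀ ^ (a + 1) * weight b p M)) := by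
        simp only [C₁]; field_simp
      _ ≤ C₁ * ((1 - M) ^ (1 + κ) * (M ^ (a + 1) * weight b p M)) := by
        have hpow : M₀ ^ (a + 1) ≤ M ^ (a + 1) := rpow_le_rpow hM₀.1.le hM₀M (by linarith)
        gcongr
      _ ≤ max C₁ C₂ * ((1 - M) ^ (1 + κ) * (M ^ (a + 1) * weight b p M)) :=
        mul_le_mul_of_nonneg_right (le_max_left _ _) hX
  · calc weightIntegral a b p M ≤ (a + 1)⁻¹ * (M ^ (a + 1) * weight b p M) :=
          weightIntegral_le ha hb hpos hderiv hdec ⟨hM.1.le, hM.2⟩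
      _ = C₂ * ((1 - M₀) ^ (1 + κ) * (M ^ (a + 1) * weight b p M)) := by
        simp only [C₂]; field_simp
      _ ≤ C₂ * ((1 - M) ^ (1 + κ) * (M ^ (a + 1) * weight b p M)) := by
        have hpow : (1 - M₀) ^ (1 + κ) ≤ (1 - M) ^ (1 + κ) :=
          rpow_le_rpow (sub_nonneg.mpr hM₀.2.le) (by linarith) (by linarith)
        gcongr
      _ ≤ max C₁ C₂ * ((1 - M) ^ (1 + κ) * (M ^ (a + 1) * weight b p M)) :=
        mul_le_mul_of_nonneg_right (le_max_right _ _) hX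

end WeightIntegral

lemma le_sq_mul_sq_sub_sq_div {a C θ M g : ℝ} (hM : M ∈ Ioo (0:ℝ) 1) (hp : 0 < p M)
    (hg : 0 < g) (hgθ : g ≤ θ * (M ^ (a + 1) * weight b p M))
    (hgC : g ≤ C * (1 - M) ^ (1 + κ) * (M ^ (a + 1) * weight b p M))
    (hθ₀ : 0 ≤ θ) (hθ₁ : θ ≤ 1) :
    (1 - θ ^ 2) / (4 * C) * M ^ (a - 1) / (1 - M) ^ (1 + b + κ)
      ≤ p M ^ 2 * (((M * (M ^ a * weight b p M)) ^ 2 - g ^ 2) / (4 * M ^ 2 * g)) := by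
  have h1M : 0 < 1 - M := sub_pos.mpr hM.2
  set T := M ^ (a + 1) * weight b p M with hT
  have hT' : M * (M ^ a * weight b p M) = T := by rw [hT, rpow_add_one hM.1.ne']; ring
  have hsq : p M ^ 2 * T = M ^ (a - 1) * M ^ 2 / (1 - M) ^ b := by
    rw [hT, weight, show a + 1 = (a - 1) + 2 by ring, rpow_add hM.1, rpow_neg hp.le,
      rpow_neg h1M.le, rpow_two, rpow_two]
    field_simp
  rw [hT']
  calc (1 - θ ^ 2) / (4 * C) * M ^ (a - 1) / (1 - M) ^ (1 + b + κ)
      = p M ^ 2 * ((1 - θ ^ 2) * T ^ 2 / (C * (1 - M) ^ (1 + κ) * T)) / (4 * M ^ 2) := by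
        rw [show p M ^ 2 * ((1 - θ ^ 2) * T ^ 2 / (C * (1 - M) ^ (1 + κ) * T)) / (4 * M ^ 2)
            = (1 - θ ^ 2) * (p M ^ 2 * T) / (4 * C * (1 - M) ^ (1 + κ) * M ^ 2) by
              field_simp,
          hsq, show 1 + b + κ = (1 + κ) + b by ring, rpow_add h1M]
        field_simp [hM.1.ne']
    _ ≤ p M ^ 2 * ((T ^ 2 - g ^ 2) / g) / (4 * M ^ 2) :=
        div_le_div_of_nonneg_right (mul_le_mul_of_nonneg_left
          (mul_sq_div_le_sq_sub_sq_div hg hgθ hgC hθ₀ hθ₁) (sq_nonneg _)) (by positivity)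
    _ = p M ^ 2 * ((T ^ 2 - g ^ 2) / (4 * M ^ 2 * g)) := by
        field_simp

end Biofilm

theorem stmt_7_general (a b κ c : ℝ) (ha : 1 < a) (hb : 1 < b) (hκ : 0 < κ) (hc : 0 < c)
    (p p' q f f' : ℝ → ℝ)
    (hpos : ∀ M ∈ Set.Ico (0:ℝ) 1, 0 < p M)
    (hderiv : ∀ M ∈ Set.Ico (0:ℝ) 1, HasDerivAt p (p' M) M)
    (hdec : StrictAntiOn p (Set.Icc 0 1))
    (hlim : Tendsto (fun M => -(1 - M) ^ (1 + κ) * p' M / p M)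
      (nhdsWithin 1 (Set.Iio 1)) (nhds c))
    (hq : ∀ M ∈ Set.Ioo (0:ℝ) 1,
      q M = (p M / M) * ∫ s in (0:ℝ)..M, s ^ a * (1 - s) ^ (-b) * (p s) ^ (-(2:ℝ)))
    (hf : ∀ M ∈ Set.Ioo (0:ℝ) 1, f M = Real.sqrt (q M / p M))
    (hf' : ∀ M ∈ Set.Ioo (0:ℝ) 1, HasDerivAt f (f' M) M) :
    ∃ C > 0, ∀ M ∈ Set.Ioo (0:ℝ) 1,
      C * M ^ (a - 1) / (1 - M) ^ (1 + b + κ)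
        ≤ (p M) ^ 2 * f' M * (M * f' M + f M) := by
  have ha0 : 0 ≤ a := by linarith
  have hb0 : 0 ≤ b := by linarith
  have hanti : AntitoneOn p (Ico 0 1) := hdec.antitoneOn.mono Ico_subset_Icc_self
  obtain ⟨C, hC, hbound⟩ := Biofilm.exists_weightIntegral_le ha0 hb0 hκ hc hpos hderiv hanti hlim
  have hθ₀ : 0 < (a + 1)⁻¹ := by positivity
  have hθ₁ : (a + 1)⁻¹ < 1 := inv_lt_one_of_one_lt₀ (by linarith)
  refine ⟨(1 - (a + 1)⁻¹ ^ 2) / (4 * C), div_pos (by nlinarith) (by positivity), fun M hM => ?_⟩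
  set g := Biofilm.weightIntegral a b p
  have hg : 0 < g M := Biofilm.weightIntegral_pos ha0 hpos hderiv hM
  have hpM : 0 < p M := hpos M ⟨hM.1.le, hM.2⟩
  have hfg : f =ᶠ[𝓝 M] fun x => √(g x / x) := by
    filter_upwards [isOpen_Ioo.mem_nhds hM] with x hx
    rw [hf x hx, hq x hx]
    simp only [g, Biofilm.weightIntegral, Biofilm.weight, mul_assoc]
    field_simp [(hpos x ⟨hx.1.le, hx.2⟩).ne']
  rw [mul_assoc, deriv_mul_mul_deriv_add_of_eq_sqrt_div hM.1
    (Biofilm.hasDerivAt_weightIntegral ha0 hpos hderiv hM) hg hfg (hf' M hM)]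
  exact Biofilm.le_sq_mul_sq_sub_sq_div hM hpM hg
    (Biofilm.weightIntegral_le ha0 hb0 hpos hderiv hanti ⟨hM.1.le, hM.2⟩) (hbound M hM)
    hθ₀.le hθ₁.le

theorem stmt_7 (a b κ c : ℝ) (ha : 1 < a) (hb : 1 < b) (hκ : 0 < κ) (hc : 0 < c)
    (p p' q f f' : ℝ → ℝ)
    (hcont : ContinuousOn p (Set.Icc 0 1))
    (hpos : ∀ M ∈ Set.Ico (0:ℝ) 1, 0 < p M)
    (hderiv : ∀ M ∈ Set.Ico (0:ℝ) 1, HasDerivAt p (p' M) M)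
    (hdec : StrictAntiOn p (Set.Icc 0 1))
    (hp1 : p 1 = 0)
    (hlim : Tendsto (fun M => -(1 - M) ^ (1 + κ) * p' M / p M)
      (nhdsWithin 1 (Set.Iio 1)) (nhds c))
    (hq : ∀ M ∈ Set.Ioo (0:ℝ) 1,
      q M = (p M / M) * ∫ s in (0:ℝ)..M, s ^ a * (1 - s) ^ (-b) * (p s) ^ (-(2:ℝ)))
    (hf : ∀ M ∈ Set.Ioo (0:ℝ) 1, f M = Real.sqrt (q M / p M))
    (hf' : ∀ M ∈ Set.Ioo (0:ℝ) 1, HasDerivAt f (f' M) M) :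
    ∃ C > 0, ∀ M ∈ Set.Ioo (0:ℝ) 1,
      C * M ^ (a - 1) / (1 - M) ^ (1 + b + κ)
        ≤ (p M) ^ 2 * f' M * (M * f' M + f M) :=
  stmt_7_general a b κ c ha hb hκ hc p p' q f f' hpos hderiv hdec hlim hq hf hf'
end

section
/- Let a, b > 1 and define Q(M) = ∫₀^M s^a (1-s)^{-b} ds for 0 ≤ M < 1. Then there exists a constant D > 0 (depending only on a) such that for all M₁, M₂ ∈ [0,1): D (Q(M₁) − Q(M₂))(M₁ − M₂) ≥ (max{M₁, M₂})^a (M₁ − M₂)². -/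
/-!
On `[0, 1)` the weight `(1 - s) ^ (-b)` is at least `1`, so for `M₂ ≤ M₁` the increment
`Q(M₁) - Q(M₂)` dominates `∫_{M₂}^{M₁} s ^ a ds = (M₁ ^ (a + 1) - M₂ ^ (a + 1)) / (a + 1)`, and
`M₁ ^ (a + 1) - M₂ ^ (a + 1) ≥ M₁ ^ a (M₁ - M₂)` because `M₂ ^ a ≤ M₁ ^ a`. This gives the
estimate with `D = a + 1`; the case `M₁ < M₂` follows by symmetry.
-/

open Real Set

theorem rpow_mul_sub_le_rpow_add_one_sub_rpow_add_one {a x y : ℝ} (ha : 0 ≤ a) (hy : 0 ≤ y)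
    (hyx : y ≤ x) : x ^ a * (x - y) ≤ x ^ (a + 1) - y ^ (a + 1) := by
  rw [rpow_add_one' (hy.trans hyx) (by linarith), rpow_add_one' hy (by linarith)]
  nlinarith [mul_le_mul_of_nonneg_right (rpow_le_rpow hy hyx ha) hy]

theorem rpow_mul_sub_sq_le_integral_mul_sub {a x y : ℝ} {f : ℝ → ℝ} (ha : 0 ≤ a) (hy : 0 ≤ y)
    (hyx : y ≤ x) (hf : IntervalIntegrable f MeasureTheory.volume y x)
    (hf_ge : ∀ s ∈ Icc y x, s ^ a ≤ f s) :
    x ^ a * (x - y) ^ 2 ≤ (a + 1) * ((∫ s in y..x, f s) * (x - y)) := by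
  have hsub : 0 ≤ x - y := sub_nonneg.mpr hyx
  have hpow_int : IntervalIntegrable (fun s : ℝ => s ^ a) MeasureTheory.volume y x :=
    intervalIntegral.intervalIntegrable_rpow' (by linarith)
  calc x ^ a * (x - y) ^ 2 = x ^ a * (x - y) * (x - y) := by ring
    _ ≤ (x ^ (a + 1) - y ^ (a + 1)) * (x - y) :=
        mul_le_mul_of_nonneg_right (rpow_mul_sub_le_rpow_add_one_sub_rpow_add_one ha hy hyx) hsub
    _ = (a + 1) * ((∫ s in y..x, s ^ a) * (x - y)) := by
        rw [integral_rpow (Or.inl (by linarith))]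
        field_simp
    _ ≤ (a + 1) * ((∫ s in y..x, f s) * (x - y)) := by
        gcongr
        exact intervalIntegral.integral_mono_on hyx hpow_int hf hf_ge

theorem continuousOn_rpow_mul_one_sub_rpow_neg {a : ℝ} (b : ℝ) (ha : 0 ≤ a) :
    ContinuousOn (fun s : ℝ => s ^ a * (1 - s) ^ (-b)) (Ico 0 1) := by
  refine (continuousOn_id.rpow_const fun _ _ => Or.inr ha).mul
    ((continuousOn_const.sub continuousOn_id).rpow_const fun s hs => Or.inl ?_)
  exact (sub_pos.mpr hs.2).ne'

theorem rpow_le_rpow_mul_one_sub_rpow_neg (a : ℝ) {b s : ℝ} (hb : 0 ≤ b) (hs₀ : 0 ≤ s)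
    (hs₁ : s < 1) : s ^ a ≤ s ^ a * (1 - s) ^ (-b) :=
  le_mul_of_one_le_right (rpow_nonneg hs₀ a)
    (one_le_rpow_of_pos_of_le_one_of_nonpos (by linarith) (by linarith) (by linarith))

theorem stmt_10 (a b : ℝ) (ha : 1 < a) (hb : 1 < b) :
    ∃ D > 0, ∀ M₁ ∈ Set.Ico (0:ℝ) 1, ∀ M₂ ∈ Set.Ico (0:ℝ) 1,
      (max M₁ M₂) ^ a * (M₁ - M₂) ^ 2
        ≤ D * (((∫ s in (0:ℝ)..M₁, s ^ a * (1 - s) ^ (-b))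
            - ∫ s in (0:ℝ)..M₂, s ^ a * (1 - s) ^ (-b)) * (M₁ - M₂)) := by
  have hint : ∀ ⦃c⦄, c ∈ Ico (0:ℝ) 1 → ∀ ⦃d⦄, d ∈ Ico (0:ℝ) 1 →
      IntervalIntegrable (fun s : ℝ => s ^ a * (1 - s) ^ (-b)) MeasureTheory.volume c d :=
    fun c hc d hd => ((continuousOn_rpow_mul_one_sub_rpow_neg b (by linarith)).mono
      (ordConnected_Ico.uIcc_subset hc hd)).intervalIntegrable
  have h₀ : (0:ℝ) ∈ Ico (0:ℝ) 1 := ⟨le_rfl, one_pos⟩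
  have key : ∀ x ∈ Ico (0:ℝ) 1, ∀ y ∈ Ico (0:ℝ) 1, y ≤ x →
      x ^ a * (x - y) ^ 2 ≤ (a + 1) * (((∫ s in (0:ℝ)..x, s ^ a * (1 - s) ^ (-b))
        - ∫ s in (0:ℝ)..y, s ^ a * (1 - s) ^ (-b)) * (x - y)) := by
    intro x hx y hy hyx
    rw [intervalIntegral.integral_interval_sub_left (hint h₀ hx) (hint h₀ hy)]
    exact rpow_mul_sub_sq_le_integral_mul_sub (by linarith) hy.1 hyx (hint hy hx) fun s hs =>
      rpow_le_rpow_mul_one_sub_rpow_neg a (by linarith) (hy.1.trans hs.1) (hs.2.trans_lt hx.2)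
  refine ⟨a + 1, by linarith, fun M₁ h₁ M₂ h₂ => ?_⟩
  rcases le_total M₂ M₁ with h | h
  · simpa only [max_eq_left h] using key M₁ h₁ M₂ h₂ h
  · rw [max_eq_right h]
    linarith [key M₂ h₂ M₁ h₁ h]
end
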